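/- arXiv:0905.0350 — 10 statements merged into one kernel-verified Lean document; each statement's English description precedes it below -/
import Mathlib

section
/- For integers a, b ≥ 1 and integers N > k ≥ 1 with k < N, the partial fraction decomposition 1/(k^a (N-k)^b) = Σ_{i=1}^{a} C(i+b-2, b-1) / (N^{i+b-1} k^{a+1-i}) + Σ_{i=1}^{b} C(i+a-2, a-1) / (N^{i+a-1} (N-k)^{b+1-i}) holds. -/
lemma base_sum (x y : ℚ) (hx : x ≠ 0) (hy : y ≠ 0) (hN : x + y ≠ 0) (b : ℕ) :
    1 / (x * y^(b+1)) =
      1 / ((x+y)^(b+1) * x) + ∑ j ∈ Finset.range (b+1), (1:ℚ) / ((x+y)^(j+1) * y^(b+1-j)) := by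
  induction b with
  | zero =>
    rw [Finset.sum_range_one]
    norm_num
    field_simp
    ring
  | succ b ih =>
    rw [Finset.sum_range_succ' (fun j => (1:ℚ) / ((x+y)^(j+1) * y^(b+1+1-j)))]
    have e : ∀ j ∈ Finset.range (b+1),
        (1:ℚ)/((x+y)^(j+1+1) * y^(b+1+1-(j+1))) = (1/(x+y)) * (1/((x+y)^(j+1) * y^(b+1-j))) := by
      intro j hj
      have h1 : b+1+1-(j+1) = b+1-j := by omega
      rw [h1, pow_succ]
      field_simp
    rw [Finset.sum_congr rfl e, ← Finset.mul_sum]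
    have hsum : ∑ j ∈ Finset.range (b+1), (1:ℚ) / ((x+y)^(j+1) * y^(b+1-j))
        = 1 / (x * y^(b+1)) - 1 / ((x+y)^(b+1) * x) := by linarith
    rw [hsum]
    simp only [Nat.sub_zero]
    field_simp
    ring

def PF (x y : ℚ) (a b : ℕ) : Prop :=
  1 / (x ^ (a+1) * y ^ (b+1)) =
    (∑ j ∈ Finset.range (a+1),
      (Nat.choose (j+b) b : ℚ) / ((x+y) ^ (j+b+1) * x ^ (a+1-j)))
    + ∑ j ∈ Finset.range (b+1),
      (Nat.choose (j+a) a : ℚ) / ((x+y) ^ (j+a+1) * y ^ (b+1-j))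

lemma PF_swap {x y : ℚ} {a b : ℕ} (h : PF x y a b) : PF y x b a := by
  unfold PF at h ⊢
  rw [add_comm y x, mul_comm]
  linarith

lemma PF_zero (x y : ℚ) (hx : x ≠ 0) (hy : y ≠ 0) (hN : x + y ≠ 0) (b : ℕ) :
    PF x y 0 b := by
  unfold PF
  simp only [zero_add, pow_one, Nat.add_zero, Nat.choose_self, Nat.cast_one,
    Finset.sum_range_one, Nat.choose_zero_right, Nat.sub_zero]
  exact base_sum x y hx hy hN b

lemma sum_step (x N : ℚ) (hx : x ≠ 0) (hN : N ≠ 0) (a b : ℕ) :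
    ∑ j ∈ Finset.range (a+1+1),
        (Nat.choose (j+(b+1)) (b+1) : ℚ) / (N^(j+(b+1)+1) * x^(a+1+1-j))
    = (1/N) * ∑ j ∈ Finset.range (a+1+1),
        (Nat.choose (j+b) b : ℚ) / (N^(j+b+1) * x^(a+1+1-j))
    + (1/N) * ∑ j ∈ Finset.range (a+1),
        (Nat.choose (j+(b+1)) (b+1) : ℚ) / (N^(j+(b+1)+1) * x^(a+1-j)) := by
  have e1 : ∀ j ∈ Finset.range (a+1+1),
      (Nat.choose (j+(b+1)) (b+1) : ℚ) / (N^(j+(b+1)+1) * x^(a+1+1-j))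
      = (1/N) * ((Nat.choose (j+b) b : ℚ) / (N^(j+b+1) * x^(a+1+1-j)))
        + (Nat.choose (j+b) (b+1) : ℚ) / (N^(j+(b+1)+1) * x^(a+1+1-j)) := by
    intro j hj
    have hp : (Nat.choose (j+(b+1)) (b+1) : ℚ)
        = (Nat.choose (j+b) b : ℚ) + (Nat.choose (j+b) (b+1) : ℚ) := by
      have := Nat.choose_succ_succ (j+b) b
      have h2 : j+(b+1) = (j+b)+1 := by omega
      rw [h2]
      exact_mod_cast this
    rw [hp]
    have hxne : x^(a+1+1-j) ≠ 0 := pow_ne_zero _ hx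
    have hNne : N^(j+b+1) ≠ 0 := pow_ne_zero _ hN
    field_simp
    ring
  rw [Finset.sum_congr rfl e1, Finset.sum_add_distrib, ← Finset.mul_sum]
  congr 1
  rw [Finset.sum_range_succ'
    (fun j => (Nat.choose (j+b) (b+1) : ℚ) / (N^(j+(b+1)+1) * x^(a+1+1-j)))]
  have e2 : ∀ j ∈ Finset.range (a+1),
      (Nat.choose (j+1+b) (b+1) : ℚ) / (N^(j+1+(b+1)+1) * x^(a+1+1-(j+1)))
      = (1/N) * ((Nat.choose (j+(b+1)) (b+1) : ℚ) / (N^(j+(b+1)+1) * x^(a+1-j))) := by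
    intro j hj
    simp only [Finset.mem_range] at hj
    have h1 : j+1+b = j+(b+1) := by omega
    have h2 : a+1+1-(j+1) = a+1-j := by omega
    have h3 : j+1+(b+1)+1 = (j+(b+1)+1)+1 := by omega
    rw [h1, h2, h3, pow_succ]
    have hxne : x^(a+1-j) ≠ 0 := pow_ne_zero _ hx
    have hNne : N^(j+(b+1)+1) ≠ 0 := pow_ne_zero _ hN
    field_simp
  rw [Finset.sum_congr rfl e2, ← Finset.mul_sum]
  have : (Nat.choose (0+b) (b+1) : ℚ) = 0 := by
    norm_cast
    exact Nat.choose_eq_zero_of_lt (by omega)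
  rw [this]
  simp

lemma PF_step (x y : ℚ) (hx : x ≠ 0) (hy : y ≠ 0) (hN : x + y ≠ 0) (a b : ℕ)
    (h1 : PF x y a (b+1)) (h2 : PF x y (a+1) b) : PF x y (a+1) (b+1) := by
  unfold PF at h1 h2 ⊢
  have key : 1/(x^(a+1+1) * y^(b+1+1))
      = 1/(x+y) * (1/(x^(a+1)*y^(b+1+1)) + 1/(x^(a+1+1)*y^(b+1))) := by
    have h1' : x^(a+1+1) ≠ 0 := pow_ne_zero _ hx
    have h2' : y^(b+1+1) ≠ 0 := pow_ne_zero _ hy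
    field_simp
    ring
  rw [key, h1, h2, sum_step x (x+y) hx hN a b, sum_step y (x+y) hy hN b a]
  ring

lemma PF_all (x y : ℚ) (hx : x ≠ 0) (hy : y ≠ 0) (hN : x + y ≠ 0) (a b : ℕ) :
    PF x y a b := by
  induction a generalizing b with
  | zero => exact PF_zero x y hx hy hN b
  | succ a iha =>
    induction b with
    | zero => exact PF_swap (PF_zero y x hy hx (by rwa [add_comm]) (a+1))
    | succ b ihb => exact PF_step x y hx hy hN a b (iha (b+1)) ihb

/-- Partial fraction decomposition of `1/(k^a (N-k)^b)`. -/
theorem partial_fraction (a b k N : ℕ) (ha : 1 ≤ a) (hb : 1 ≤ b)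
    (hk : 1 ≤ k) (hkN : k < N) :
    (1 : ℚ) / ((k : ℚ) ^ a * ((N - k : ℕ) : ℚ) ^ b) =
      (∑ i ∈ Finset.Icc 1 a,
        (Nat.choose (i + b - 2) (b - 1) : ℚ) / ((N : ℚ) ^ (i + b - 1) * (k : ℚ) ^ (a + 1 - i)))
      + ∑ i ∈ Finset.Icc 1 b,
        (Nat.choose (i + a - 2) (a - 1) : ℚ) /
          ((N : ℚ) ^ (i + a - 1) * ((N - k : ℕ) : ℚ) ^ (b + 1 - i)) := by
  obtain ⟨a', rfl⟩ : ∃ a', a = a' + 1 := ⟨a - 1, by omega⟩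
  obtain ⟨b', rfl⟩ : ∃ b', b = b' + 1 := ⟨b - 1, by omega⟩
  have hx : (k : ℚ) ≠ 0 := by positivity
  have hy : ((N - k : ℕ) : ℚ) ≠ 0 := by
    have : 0 < N - k := by omega
    positivity
  have hxy : (k : ℚ) + ((N - k : ℕ) : ℚ) = (N : ℚ) := by
    have : ((N - k : ℕ) : ℚ) = (N : ℚ) - (k : ℚ) := by
      push_cast [Nat.cast_sub hkN.le]
      ring
    rw [this]; ring
  have hN : (k : ℚ) + ((N - k : ℕ) : ℚ) ≠ 0 := by
    rw [hxy]
    have : 0 < N := by omega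
    positivity
  have h := PF_all (k : ℚ) ((N - k : ℕ) : ℚ) hx hy hN a' b'
  unfold PF at h
  rw [hxy] at h
  have e1 : ∑ i ∈ Finset.Icc 1 (a'+1),
      (Nat.choose (i + (b'+1) - 2) ((b'+1) - 1) : ℚ) /
        ((N : ℚ) ^ (i + (b'+1) - 1) * (k : ℚ) ^ ((a'+1) + 1 - i))
      = ∑ j ∈ Finset.range (a'+1),
        (Nat.choose (j+b') b' : ℚ) / ((N : ℚ) ^ (j+b'+1) * (k : ℚ) ^ (a'+1-j)) := by
    rw [← Finset.Ico_add_one_right_eq_Icc, Finset.sum_Ico_eq_sum_range]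
    apply Finset.sum_congr rfl
    intro j hj
    simp only [Finset.mem_range] at hj
    have c1 : 1 + j + (b'+1) - 2 = j + b' := by omega
    have c2 : b' + 1 - 1 = b' := by omega
    have c3 : 1 + j + (b'+1) - 1 = j + b' + 1 := by omega
    have c4 : a' + 1 + 1 - (1 + j) = a' + 1 - j := by omega
    rw [c1, c2, c3, c4]
  have e2 : ∑ i ∈ Finset.Icc 1 (b'+1),
      (Nat.choose (i + (a'+1) - 2) ((a'+1) - 1) : ℚ) /
        ((N : ℚ) ^ (i + (a'+1) - 1) * ((N - k : ℕ) : ℚ) ^ ((b'+1) + 1 - i))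
      = ∑ j ∈ Finset.range (b'+1),
        (Nat.choose (j+a') a' : ℚ) / ((N : ℚ) ^ (j+a'+1) * ((N - k : ℕ) : ℚ) ^ (b'+1-j)) := by
    rw [← Finset.Ico_add_one_right_eq_Icc, Finset.sum_Ico_eq_sum_range]
    apply Finset.sum_congr rfl
    intro j hj
    simp only [Finset.mem_range] at hj
    have c1 : 1 + j + (a'+1) - 2 = j + a' := by omega
    have c2 : a' + 1 - 1 = a' := by omega
    have c3 : 1 + j + (a'+1) - 1 = j + a' + 1 := by omega
    have c4 : b' + 1 + 1 - (1 + j) = b' + 1 - j := by omega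
    rw [c1, c2, c3, c4]
  rw [e1, e2]
  exact h
end

section
/- For integers a, b ≥ 1, N ≥ 1, and 1 ≤ j ≤ N, one has Σ_{k=1}^{j} H_{N-k}^{(a)} / k^b + Σ_{k=1}^{N+1-j} H_{N-k}^{(b)} / k^a = -1/(j^b (N+1-j)^a) + H_j^{(b)} H_{N+1-j}^{(a)} + R_N^{(a,b)}, where R_N^{(a,b)} = Σ_{k=1}^{N} H_{N-k}^{(a)} / k^b. -/
/-- `H n s` is the `n`-th generalized harmonic number of order `s`. -/
def H (n s : ℕ) : ℚ := ∑ k ∈ Finset.Icc 1 n, 1 / (k : ℚ) ^ s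

lemma H_succ (n s : ℕ) : H (n+1) s = H n s + 1 / ((n+1 : ℕ) : ℚ) ^ s := by
  rw [H, H, Finset.sum_Icc_succ_top (by omega)]

lemma S_symm (a b N : ℕ) :
    ∑ k ∈ Finset.Icc 1 N, H (N - k) a / (k:ℚ)^b
      = ∑ k ∈ Finset.Icc 1 N, H (N - k) b / (k:ℚ)^a := by
  have key : ∀ s t : ℕ, ∑ k ∈ Finset.Icc 1 N, H (N - k) s / (k:ℚ)^t
      = ∑ p ∈ (Finset.Icc 1 N).sigma (fun k => Finset.Icc 1 (N - k)),
          (1 / (p.2:ℚ)^s) / (p.1:ℚ)^t := by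
    intro s t
    rw [Finset.sum_sigma]
    exact Finset.sum_congr rfl fun k hk => by rw [H, Finset.sum_div]
  rw [key a b, key b a]
  apply Finset.sum_nbij' (fun p => ⟨p.2, p.1⟩) (fun p => ⟨p.2, p.1⟩) <;>
    simp only [Finset.mem_sigma, Finset.mem_Icc] <;> intros <;> first | omega | ring | trivial

/-- The reciprocity relation for harmonic numbers. -/
theorem harmonic_reciprocity (a b N j : ℕ) (ha : 1 ≤ a) (hb : 1 ≤ b)
    (hN : 1 ≤ N) (hj : 1 ≤ j) (hjN : j ≤ N) :
    (∑ k ∈ Finset.Icc 1 j, H (N - k) a / (k : ℚ) ^ b)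
      + ∑ k ∈ Finset.Icc 1 (N + 1 - j), H (N - k) b / (k : ℚ) ^ a =
    - 1 / ((j : ℚ) ^ b * ((N + 1 - j : ℕ) : ℚ) ^ a) + H j b * H (N + 1 - j) a
      + ∑ k ∈ Finset.Icc 1 N, H (N - k) a / (k : ℚ) ^ b := by
  induction j, hj using Nat.le_induction with
  | base =>
    obtain ⟨n, rfl⟩ : ∃ n, N = n + 1 := ⟨N - 1, by omega⟩
    have h1 : n + 1 + 1 - 1 = n + 1 := by omega
    have h2 : n + 1 - 1 = n := by omega
    rw [h1, S_symm b a, Finset.Icc_self, Finset.sum_singleton, h2, H_succ n a]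
    have hb1 : H 1 b = 1 := by simp [H]
    rw [hb1]
    push_cast
    field_simp
    ring
  | succ j hj1 IH =>
    obtain ⟨i, rfl⟩ : ∃ i, j = i + 1 := ⟨j - 1, by omega⟩
    obtain ⟨m, rfl⟩ : ∃ m, N = i + 1 + m + 1 := ⟨N - i - 2, by omega⟩
    have hIH := IH (by omega)
    clear IH
    have e1 : i + 1 + m + 1 + 1 - (i + 1) = m + 2 := by omega
    have e2 : i + 1 + m + 1 + 1 - (i + 1 + 1) = m + 1 := by omega
    have e3 : i + 1 + m + 1 - (i + 1 + 1) = m := by omega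
    have e4 : i + 1 + m + 1 - (m + 2) = i := by omega
    rw [e1, Finset.sum_Icc_succ_top (by omega : 1 ≤ m + 2), e4,
        H_succ (m+1) a, H_succ m a, H_succ i b] at hIH
    rw [e2, Finset.sum_Icc_succ_top (by omega : 1 ≤ i + 1 + 1), e3,
        H_succ (i+1) b, H_succ i b, H_succ m a]
    push_cast at hIH ⊢
    linear_combination hIH
end

section
/- For integers a, b ≥ 1 and N ≥ 0, the sum R_N^{(a,b)} = Σ_{k=1}^{N} H_{N-k}^{(a)} / k^b satisfies R_N^{(a,b)} = Σ_{i=1}^{a} C(i+b-2, b-1) ζ_N(i+b-1, a+1-i) + Σ_{i=1}^{b} C(i+a-2, a-1) ζ_N(i+a-1, b+1-i). -/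
/-- `zeta2 N a₁ a₂` is the finite double zeta value `ζ_N(a₁, a₂)`. -/
def zeta2 (N a₁ a₂ : ℕ) : ℚ :=
  ∑ n₁ ∈ Finset.Icc 1 N, ∑ n₂ ∈ Finset.Icc 1 (n₁ - 1), 1 / ((n₁ : ℚ) ^ a₁ * (n₂ : ℚ) ^ a₂)


open Finset

/-- partial sum appearing in Euler's decomposition -/
def S (z x : ℚ) (a b : ℕ) : ℚ :=
  ∑ j ∈ range (a+1), (Nat.choose (j+b) b : ℚ) / (z^(j+b+1) * x^(a-j) * x)

lemma tele (x y : ℚ) (hx : x ≠ 0) (hy : y ≠ 0) (hxy : x + y ≠ 0) (b : ℕ) :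
    1/(x^(0+1) * y^(b+1)) = S (x+y) x 0 b + S (x+y) y b 0 := by
  induction b with
  | zero =>
      simp only [S, range_one, sum_singleton]
      norm_num
      field_simp
      ring
  | succ b ih =>
      have hS1 : S (x+y) x 0 (b+1) = 1 / ((x+y)^(b+2) * x) := by
        simp [S]
      have hS1' : S (x+y) x 0 b = 1 / ((x+y)^(b+1) * x) := by
        simp [S]
      have hsplit : S (x+y) y (b+1) 0 =
          (∑ j ∈ range (b+1), (1:ℚ) / ((x+y)^(j+1) * y^(b-j) * y)) / (x+y)
          + 1 / ((x+y) * y^(b+1) * y) := by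
        rw [S, sum_range_succ']
        simp only [Nat.choose_zero_right, Nat.cast_one]
        congr 1
        · rw [sum_div]
          refine sum_congr rfl fun j hj => ?_
          have : b + 1 - (j+1) = b - j := by omega
          rw [this, div_div]
          ring_nf
        · norm_num
      have hsum : (∑ j ∈ range (b+1), (1:ℚ) / ((x+y)^(j+1) * y^(b-j) * y))
          = 1/(x^(0+1) * y^(b+1)) - 1 / ((x+y)^(b+1) * x) := by
        have := ih
        rw [hS1'] at this
        have hSy : S (x+y) y b 0 = ∑ j ∈ range (b+1), (1:ℚ) / ((x+y)^(j+1) * y^(b-j) * y) := by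
          simp [S]
        rw [hSy] at this
        linarith
      rw [hS1, hsplit, hsum]
      field_simp
      ring

lemma split (z x : ℚ) (a b : ℕ) :
    S z x (a+1) (b+1) = S z x a (b+1) / z + S z x (a+1) b / z := by
  have pascal : ∀ j : ℕ, (Nat.choose (j+(b+1)) (b+1) : ℚ)
      = (Nat.choose (j+b) b : ℚ) + (Nat.choose (j+b) (b+1) : ℚ) := by
    intro j
    have : j + (b+1) = (j+b) + 1 := by omega
    rw [this, Nat.choose_succ_succ]
    push_cast
    ring
  have expand : S z x (a+1) (b+1)
      = (∑ j ∈ range (a+2), (Nat.choose (j+b) b : ℚ) / (z^(j+b+2) * x^(a+1-j) * x))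
        + (∑ j ∈ range (a+2), (Nat.choose (j+b) (b+1) : ℚ) / (z^(j+b+2) * x^(a+1-j) * x)) := by
    rw [S, ← sum_add_distrib]
    refine sum_congr rfl fun j hj => ?_
    rw [pascal j, add_div]
    congr 2 <;> · congr 1; omega
  rw [expand]
  rw [add_comm (S z x a (b+1) / z)]
  congr 1
  · rw [S, sum_div]
    refine sum_congr rfl fun j hj => ?_
    rw [div_div]
    congr 1
    ring
  · rw [sum_range_succ']
    have h0 : (Nat.choose (0+b) (b+1) : ℚ) / (z^(0+b+2) * x^(a+1-0) * x) = 0 := by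
      rw [Nat.choose_eq_zero_of_lt (by omega)]
      simp
    rw [h0, add_zero, S, sum_div]
    refine sum_congr rfl fun j hj => ?_
    rw [div_div]
    have e1 : j + 1 + b + 2 = j + (b+1) + 1 + 1 := by omega
    have e2 : a + 1 - (j+1) = a - j := by omega
    have e3 : j + 1 + b = j + (b+1) := by omega
    rw [e1, e2, e3]
    congr 1
    ring

lemma euler_key (x y : ℚ) (hx : x ≠ 0) (hy : y ≠ 0) (hxy : x + y ≠ 0) (a : ℕ) :
    ∀ b, 1/(x^(a+1) * y^(b+1)) = S (x+y) x a b + S (x+y) y b a := by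
  induction a with
  | zero => exact tele x y hx hy hxy
  | succ a iha =>
    intro b
    induction b with
    | zero =>
      have h := tele y x hy hx (by rwa [add_comm]) (a+1)
      rw [add_comm y x] at h
      rw [show x^(a+1+1) * y^(0+1) = y^(0+1) * x^(a+1+1) by ring, h, add_comm]
    | succ b ihb =>
      have h1 := iha (b+1)
      have h2 := ihb
      rw [split (x+y) x a b, split (x+y) y b a]
      have key : 1/(x^(a+1+1) * y^(b+1+1))
          = (1/(x^(a+1) * y^(b+1+1)) + 1/(x^(a+1+1) * y^(b+1))) / (x+y) := by
        field_simp
        ring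
      rw [key, h1, h2]
      ring

lemma triangle (N : ℕ) (f : ℕ → ℕ → ℚ) :
    ∑ k ∈ Icc 1 N, ∑ j ∈ Icc 1 (N - k), f j k
      = ∑ n ∈ Icc 1 N, ∑ m ∈ Icc 1 (n - 1), f m (n - m) := by
  have step1 : ∀ k ∈ Icc 1 N, ∑ j ∈ Icc 1 (N - k), f j k
      = ∑ n ∈ Icc (k+1) N, f (n - k) k := by
    intro k hk
    simp only [mem_Icc] at hk
    refine sum_nbij' (fun j => j + k) (fun n => n - k) ?_ ?_ ?_ ?_ ?_ <;>
      intro j hj <;> simp only [mem_Icc] at * <;> first | omega | (congr 1; omega)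
  rw [sum_congr rfl step1]
  rw [sum_comm' (t' := Icc 1 N) (s' := fun n => Icc 1 (n - 1))
    (by intro k n; simp only [mem_Icc]; omega)]
  refine sum_congr rfl fun n hn => ?_
  simp only [mem_Icc] at hn
  refine sum_nbij' (fun k => n - k) (fun m => n - m) ?_ ?_ ?_ ?_ ?_ <;>
    intro k hk <;> simp only [mem_Icc] at * <;> first | omega | (congr 2; omega)

lemma pointwise (a b n m : ℕ) (ha : 1 ≤ a) (hb : 1 ≤ b) (hm : 1 ≤ m) (hmn : m < n) :
    1/((m:ℚ)^a * ((n - m : ℕ):ℚ)^b)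
    = (∑ i ∈ Icc 1 a, (Nat.choose (i+b-2) (b-1) : ℚ) / ((n:ℚ)^(i+b-1) * (m:ℚ)^(a+1-i)))
    + (∑ i ∈ Icc 1 b, (Nat.choose (i+a-2) (a-1) : ℚ) / ((n:ℚ)^(i+a-1) * ((n-m:ℕ):ℚ)^(b+1-i))) := by
  obtain ⟨a', rfl⟩ : ∃ a', a = a' + 1 := ⟨a - 1, by omega⟩
  obtain ⟨b', rfl⟩ : ∃ b', b = b' + 1 := ⟨b - 1, by omega⟩
  set x : ℚ := (m : ℚ) with hxdef
  set y : ℚ := ((n - m : ℕ) : ℚ) with hydef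
  have hx : x ≠ 0 := by rw [hxdef]; exact Nat.cast_ne_zero.mpr (by omega)
  have hy : y ≠ 0 := by rw [hydef]; exact Nat.cast_ne_zero.mpr (by omega)
  have hxy : x + y = (n : ℚ) := by
    rw [hxdef, hydef]
    push_cast [Nat.cast_sub (le_of_lt hmn)]
    ring
  have key := euler_key x y hx hy
    (by rw [hxy]; exact Nat.cast_ne_zero.mpr (by omega)) a' b'
  rw [hxy] at key
  rw [key]
  congr 1
  · rw [S, show Icc 1 (a'+1) = Ico 1 (a'+2) from (Finset.Ico_add_one_right_eq_Icc 1 (a'+1)).symm,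
      Finset.sum_Ico_eq_sum_range]
    refine sum_congr (by norm_num) fun j hj => ?_
    simp only [mem_range] at hj
    have e1 : 1 + j + (b'+1) - 2 = j + b' := by omega
    have e2 : 1 + j + (b'+1) - 1 = j + b' + 1 := by omega
    have e3 : a' + 1 + 1 - (1 + j) = (a' - j) + 1 := by omega
    have e4 : b' + 1 - 1 = b' := by omega
    rw [e1, e2, e3, e4, pow_succ]
    ring
  · rw [S, show Icc 1 (b'+1) = Ico 1 (b'+2) from (Finset.Ico_add_one_right_eq_Icc 1 (b'+1)).symm,
      Finset.sum_Ico_eq_sum_range]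
    refine sum_congr (by norm_num) fun j hj => ?_
    simp only [mem_range] at hj
    have e1 : 1 + j + (a'+1) - 2 = j + a' := by omega
    have e2 : 1 + j + (a'+1) - 1 = j + a' + 1 := by omega
    have e3 : b' + 1 + 1 - (1 + j) = (b' - j) + 1 := by omega
    have e4 : a' + 1 - 1 = a' := by omega
    rw [e1, e2, e3, e4, pow_succ]
    ring

lemma reflectInner (n : ℕ) (g : ℕ → ℚ) :
    ∑ m ∈ Icc 1 (n-1), g m = ∑ m ∈ Icc 1 (n-1), g (n - m) := by
  refine sum_nbij' (fun m => n - m) (fun m => n - m) ?_ ?_ ?_ ?_ ?_ <;>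
    intro m hm <;> simp only [mem_Icc] at * <;> first | omega | (congr 1; omega)

lemma swap2 (P : Finset ℕ) (N : ℕ) (F : ℕ → ℕ → ℕ → ℚ) :
    ∑ i ∈ P, ∑ n ∈ Icc 1 N, ∑ m ∈ Icc 1 (n-1), F i n m
      = ∑ n ∈ Icc 1 N, ∑ m ∈ Icc 1 (n-1), ∑ i ∈ P, F i n m := by
  rw [Finset.sum_comm]
  exact sum_congr rfl fun n _ => Finset.sum_comm


/-- Finite analogue of Euler's decomposition formula. -/
theorem R_eval (a b N : ℕ) (ha : 1 ≤ a) (hb : 1 ≤ b) :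
    ∑ k ∈ Finset.Icc 1 N, H (N - k) a / (k : ℚ) ^ b =
      (∑ i ∈ Finset.Icc 1 a,
        (Nat.choose (i + b - 2) (b - 1) : ℚ) * zeta2 N (i + b - 1) (a + 1 - i))
      + ∑ i ∈ Finset.Icc 1 b,
        (Nat.choose (i + a - 2) (a - 1) : ℚ) * zeta2 N (i + a - 1) (b + 1 - i) := by
  have lhs_eq : ∑ k ∈ Icc 1 N, H (N-k) a / (k:ℚ)^b
      = ∑ k ∈ Icc 1 N, ∑ j ∈ Icc 1 (N-k), 1/((j:ℚ)^a * (k:ℚ)^b) := by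
    refine sum_congr rfl fun k hk => ?_
    rw [H, sum_div]
    exact sum_congr rfl fun j hj => by rw [div_div]
  rw [lhs_eq, triangle N (fun j k => 1/((j:ℚ)^a * (k:ℚ)^b))]
  have distr : ∀ (P : Finset ℕ) (c : ℕ → ℚ) (p q : ℕ → ℕ),
      (∑ i ∈ P, c i * zeta2 N (p i) (q i))
      = ∑ i ∈ P, ∑ n ∈ Icc 1 N, ∑ m ∈ Icc 1 (n-1),
          c i / ((n:ℚ)^(p i) * (m:ℚ)^(q i)) := by
    intro P c p q
    refine sum_congr rfl fun i _ => ?_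
    rw [zeta2, mul_sum]
    refine sum_congr rfl fun n _ => ?_
    rw [mul_sum]
    exact sum_congr rfl fun m _ => by rw [mul_one_div]
  rw [distr, distr, swap2, swap2, ← sum_add_distrib]
  refine sum_congr rfl fun n hn => ?_
  rw [reflectInner n (fun m => ∑ i ∈ Icc 1 b,
      (Nat.choose (i + a - 2) (a - 1) : ℚ) / ((n:ℚ)^(i+a-1) * (m:ℚ)^(b+1-i))),
    ← sum_add_distrib]
  refine sum_congr rfl fun m hm => ?_
  simp only [mem_Icc] at hn hm
  exact pointwise a b n m ha hb hm.1 (by omega)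
end

section
/- The quantity R_N(a; b) = Σ_{k=1}^{N} ζ_{N-k}(b_1,…,b_s) ζ_{k-1}(a_2,…,a_r) / k^{a_1} is symmetric: R_N(a; b) = R_N(b; a), i.e. Σ_{k=1}^{N} ζ_{N-k}(b) ζ_{k-1}(a_2,…,a_r) / k^{a_1} = Σ_{k=1}^{N} ζ_{N-k}(a) ζ_{k-1}(b_2,…,b_s) / k^{b_1}. -/
/-- `zetaN N [a₁, …, a_r]` is the finite multiple zeta value
`ζ_N(a₁,…,a_r) = Σ_{N ≥ n₁ > ⋯ > n_r ≥ 1} Π 1/nᵢ^{aᵢ}`; `ζ_N` of the empty index is `1`. -/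
def zetaN : ℕ → List ℕ → ℚ
  | _, [] => 1
  | N, a :: as => ∑ n ∈ Finset.Icc 1 N, zetaN (n - 1) as / (n : ℚ) ^ a

lemma key_swap (N : ℕ) (f : ℕ → ℕ → ℚ) :
    ∑ k ∈ Finset.Icc 1 N, ∑ m ∈ Finset.Icc 1 (N - k), f k m =
    ∑ m ∈ Finset.Icc 1 N, ∑ k ∈ Finset.Icc 1 (N - m), f k m := by
  have h : ∀ k : ℕ, Finset.Icc 1 (N - k) =
      (Finset.Icc 1 N).filter (fun m => k + m ≤ N) := by
    intro k; ext m; simp only [Finset.mem_Icc, Finset.mem_filter]; omega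
  calc ∑ k ∈ Finset.Icc 1 N, ∑ m ∈ Finset.Icc 1 (N - k), f k m
      = ∑ k ∈ Finset.Icc 1 N, ∑ m ∈ Finset.Icc 1 N,
          if k + m ≤ N then f k m else 0 := by
        simp_rw [h, Finset.sum_filter]
    _ = ∑ m ∈ Finset.Icc 1 N, ∑ k ∈ Finset.Icc 1 N,
          if k + m ≤ N then f k m else 0 := Finset.sum_comm
    _ = ∑ m ∈ Finset.Icc 1 N, ∑ k ∈ Finset.Icc 1 (N - m), f k m := by
        refine Finset.sum_congr rfl fun m _ => ?_
        rw [h m, Finset.sum_filter]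
        exact Finset.sum_congr rfl fun k _ => by rw [Nat.add_comm]

/-- Symmetry of `R_N(a;b)`. -/
theorem R_symm (N : ℕ) (a₁ b₁ : ℕ) (as bs : List ℕ)
    (ha : ∀ x ∈ a₁ :: as, 1 ≤ x) (hb : ∀ x ∈ b₁ :: bs, 1 ≤ x) :
    ∑ k ∈ Finset.Icc 1 N, zetaN (N - k) (b₁ :: bs) * zetaN (k - 1) as / (k : ℚ) ^ a₁ =
    ∑ k ∈ Finset.Icc 1 N, zetaN (N - k) (a₁ :: as) * zetaN (k - 1) bs / (k : ℚ) ^ b₁ := by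
  simp only [zetaN, Finset.sum_mul, Finset.sum_div]
  rw [key_swap N (fun k m =>
    zetaN (m - 1) bs / (m : ℚ) ^ b₁ * zetaN (k - 1) as / (k : ℚ) ^ a₁)]
  refine Finset.sum_congr rfl fun m _ => Finset.sum_congr rfl fun k _ => ?_
  ring
end

section
/- For multi-indices a = (a_1,…,a_r) and b = (b_1,…,b_s) of positive integers, N ≥ 1 and 1 ≤ j ≤ N, the reciprocity relation holds: Σ_{k=1}^{j} ζ_{k-1}(b_2,…,b_s) ζ_{N-k}(a) / k^{b_1} + Σ_{k=1}^{N+1-j} ζ_{k-1}(a_2,…,a_r) ζ_{N-k}(b) / k^{a_1} = ζ_{N+1-j}(a) ζ_j(b) − ζ_{j-1}(b_2,…,b_s) ζ_{N-j}(a_2,…,a_r) / (j^{b_1} (N+1-j)^{a_1}) + R_N(a; b), where R_N(a; b) = Σ_{k=1}^{N} ζ_{N-k}(b) ζ_{k-1}(a_2,…,a_r) / k^{a_1}. -/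
open Finset in
private lemma mzv_key (f g : ℕ → ℚ) (N : ℕ) (hN : 1 ≤ N) (j : ℕ) (hj : 1 ≤ j) :
    j ≤ N →
    (∑ k ∈ Icc 1 j, f k * ∑ i ∈ Icc 1 (N - k), g i)
      + ∑ k ∈ Icc 1 (N + 1 - j), g k * ∑ i ∈ Icc 1 (N - k), f i =
    (∑ k ∈ Icc 1 (N + 1 - j), g k) * (∑ k ∈ Icc 1 j, f k)
      - f j * g (N + 1 - j)
      + ∑ k ∈ Icc 1 N, g k * ∑ i ∈ Icc 1 (N - k), f i := by
  induction j, hj using Nat.le_induction with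
  | base =>
    intro _
    have e0 : N + 1 - 1 = N := by omega
    have e1 : N - 1 + 1 = N := by omega
    rw [e0, Finset.Icc_self, Finset.sum_singleton, Finset.sum_singleton]
    have hsplit := Finset.sum_Icc_succ_top (show (1:ℕ) ≤ N - 1 + 1 by omega) g
    rw [e1] at hsplit
    rw [hsplit]
    ring
  | succ j hj ih =>
    intro hjN
    have ih' := ih (by omega)
    have e1 : N + 1 - j = (N - j) + 1 := by omega
    have e2 : N + 1 - (j + 1) = N - j := by omega
    have e3 : N - (N - j + 1) = j - 1 := by omega
    have e4 : j - 1 + 1 = j := by omega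
    have e5 : N - (j + 1) + 1 = N - j := by omega
    have hsf : (∑ k ∈ Icc 1 j, f k) = (∑ k ∈ Icc 1 (j - 1), f k) + f j := by
      have := Finset.sum_Icc_succ_top (show (1:ℕ) ≤ j - 1 + 1 by omega) f
      rwa [e4] at this
    have hsg : (∑ k ∈ Icc 1 (N - j), g k)
        = (∑ k ∈ Icc 1 (N - (j + 1)), g k) + g (N - j) := by
      have := Finset.sum_Icc_succ_top (show (1:ℕ) ≤ N - (j + 1) + 1 by omega) g
      rwa [e5] at this
    rw [e1] at ih'
    rw [Finset.sum_Icc_succ_top (show (1:ℕ) ≤ N - j + 1 by omega),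
        Finset.sum_Icc_succ_top (show (1:ℕ) ≤ N - j + 1 by omega), e3, hsf, hsg] at ih'
    rw [e2, Finset.sum_Icc_succ_top (show (1:ℕ) ≤ j + 1 by omega),
        Finset.sum_Icc_succ_top (show (1:ℕ) ≤ j + 1 by omega), hsf, hsg]
    linear_combination ih'

/-- The reciprocity relation for finite multiple zeta values (Theorem 1). -/
theorem mzv_reciprocity (N j : ℕ) (a₁ b₁ : ℕ) (as bs : List ℕ)
    (ha : ∀ x ∈ a₁ :: as, 1 ≤ x) (hb : ∀ x ∈ b₁ :: bs, 1 ≤ x)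
    (hN : 1 ≤ N) (hj : 1 ≤ j) (hjN : j ≤ N) :
    (∑ k ∈ Finset.Icc 1 j, zetaN (k - 1) bs * zetaN (N - k) (a₁ :: as) / (k : ℚ) ^ b₁)
      + ∑ k ∈ Finset.Icc 1 (N + 1 - j),
          zetaN (k - 1) as * zetaN (N - k) (b₁ :: bs) / (k : ℚ) ^ a₁ =
    zetaN (N + 1 - j) (a₁ :: as) * zetaN j (b₁ :: bs)
      - zetaN (j - 1) bs * zetaN (N - j) as / ((j : ℚ) ^ b₁ * ((N + 1 - j : ℕ) : ℚ) ^ a₁)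
      + ∑ k ∈ Finset.Icc 1 N, zetaN (N - k) (b₁ :: bs) * zetaN (k - 1) as / (k : ℚ) ^ a₁ := by
  set f : ℕ → ℚ := fun k => zetaN (k - 1) bs / (k : ℚ) ^ b₁ with hf
  set g : ℕ → ℚ := fun k => zetaN (k - 1) as / (k : ℚ) ^ a₁ with hg
  have hza : ∀ M, zetaN M (a₁ :: as) = ∑ i ∈ Finset.Icc 1 M, g i := by
    intro M; rw [zetaN]
  have hzb : ∀ M, zetaN M (b₁ :: bs) = ∑ i ∈ Finset.Icc 1 M, f i := by
    intro M; rw [zetaN]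
  have hkey := mzv_key f g N hN j hj hjN
  have t1 : (∑ k ∈ Finset.Icc 1 j, zetaN (k - 1) bs * zetaN (N - k) (a₁ :: as) / (k : ℚ) ^ b₁)
      = ∑ k ∈ Finset.Icc 1 j, f k * ∑ i ∈ Finset.Icc 1 (N - k), g i := by
    refine Finset.sum_congr rfl fun k _ => ?_
    rw [hza, hf]; ring
  have t2 : (∑ k ∈ Finset.Icc 1 (N + 1 - j),
        zetaN (k - 1) as * zetaN (N - k) (b₁ :: bs) / (k : ℚ) ^ a₁)
      = ∑ k ∈ Finset.Icc 1 (N + 1 - j), g k * ∑ i ∈ Finset.Icc 1 (N - k), f i := by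
    refine Finset.sum_congr rfl fun k _ => ?_
    rw [hzb, hg]; ring
  have t3 : (∑ k ∈ Finset.Icc 1 N, zetaN (N - k) (b₁ :: bs) * zetaN (k - 1) as / (k : ℚ) ^ a₁)
      = ∑ k ∈ Finset.Icc 1 N, g k * ∑ i ∈ Finset.Icc 1 (N - k), f i := by
    refine Finset.sum_congr rfl fun k _ => ?_
    rw [hzb, hg]; ring
  have t4 : zetaN (j - 1) bs * zetaN (N - j) as / ((j : ℚ) ^ b₁ * ((N + 1 - j : ℕ) : ℚ) ^ a₁)
      = f j * g (N + 1 - j) := by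
    have e : N + 1 - j - 1 = N - j := by omega
    rw [hf, hg]
    simp only [e]
    ring
  rw [t1, t2, t3, t4, hza, hzb]
  exact hkey
end

section
/- The identity Σ_{k=1}^{j} ζ_{k-1}(b_2,…,b_s) ζ_{N-k}(a)/k^{b_1} = ζ_{N-j}(a) ζ_j(b) + Σ_{ℓ=N+1-j}^{N-1} ζ_{ℓ-1}(a_2,…,a_r) ζ_{N-ℓ}(b) / ℓ^{a_1} holds for multi-indices a, b of positive integers, N ≥ 1, and 1 ≤ j ≤ N. -/
lemma zetaN_succ (n c : ℕ) (cs : List ℕ) :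
    zetaN (n + 1) (c :: cs) = zetaN n (c :: cs) + zetaN n cs / ((n : ℚ) + 1) ^ c := by
  rw [zetaN, zetaN, Finset.sum_Icc_succ_top (by omega)]
  push_cast
  ring_nf

/-- The intermediate summation identity in the proof of Theorem 1. -/
theorem sum_identity (N j : ℕ) (a₁ b₁ : ℕ) (as bs : List ℕ)
    (ha : ∀ x ∈ a₁ :: as, 1 ≤ x) (hb : ∀ x ∈ b₁ :: bs, 1 ≤ x)
    (hN : 1 ≤ N) (hj : 1 ≤ j) (hjN : j ≤ N) :
    ∑ k ∈ Finset.Icc 1 j, zetaN (k - 1) bs * zetaN (N - k) (a₁ :: as) / (k : ℚ) ^ b₁ =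
    zetaN (N - j) (a₁ :: as) * zetaN j (b₁ :: bs)
      + ∑ l ∈ Finset.Icc (N + 1 - j) (N - 1),
          zetaN (l - 1) as * zetaN (N - l) (b₁ :: bs) / (l : ℚ) ^ a₁ := by
  revert hjN
  induction j, hj using Nat.le_induction with
  | base =>
    intro _
    rw [Finset.Icc_self, Finset.sum_singleton,
      show N + 1 - 1 = N from rfl, Finset.Icc_eq_empty (by omega), Finset.sum_empty]
    have h1 : zetaN 1 (b₁ :: bs) = zetaN 0 bs / (1 : ℚ) ^ b₁ := by
      rw [zetaN, Finset.Icc_self, Finset.sum_singleton]; norm_num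
    rw [h1]
    push_cast
    ring
  | succ j hj ih =>
    intro hjN
    have hjN' : j ≤ N := by omega
    rw [Finset.sum_Icc_succ_top (by omega : 1 ≤ j + 1), ih hjN']
    have hIcc : Finset.Icc (N + 1 - (j + 1)) (N - 1)
        = insert (N - j) (Finset.Icc (N + 1 - j) (N - 1)) := by
      rw [show N + 1 - (j + 1) = N - j from by omega]
      rw [show N + 1 - j = (N - j) + 1 from by omega, Finset.Icc_add_one_left_eq_Ioc,
        Finset.Ioc_insert_left (by omega : N - j ≤ N - 1)]
    rw [hIcc, Finset.sum_insert (by simp [Finset.mem_Icc]; omega)]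
    have hNNj : N - (N - j) = j := by omega
    rw [hNNj]
    set m := N - (j + 1) with hm
    have hNj : N - j = m + 1 := by omega
    rw [hNj, zetaN_succ m a₁ as, zetaN_succ j b₁ bs]
    push_cast
    ring
end

section
/- R_N(a; b) satisfies the recurrence R_N(a; b) = Σ_{i=1}^{a_1} Σ_{n=1}^{N} C(i+b_1-2, b_1-1) / n^{i+b_1-1} · R_{n-1}(a_1+1-i, a_2,…,a_r; b_2,…,b_s) + Σ_{i=1}^{b_1} Σ_{n=1}^{N} C(i+a_1-2, a_1-1) / n^{i+a_1-1} · R_{n-1}(a_2,…,a_r; b_1+1-i, b_2,…,b_s). -/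
/-- `R N a b` is the quantity `R_N(a;b)`; for empty first index it is interpreted,
consistently with the symmetry `R_N(a;b)=R_N(b;a)`, as `ζ_N(b)`. -/
def R (N : ℕ) : List ℕ → List ℕ → ℚ
  | [], b => zetaN N b
  | a₁ :: as, b => ∑ k ∈ Finset.Icc 1 N, zetaN (N - k) b * zetaN (k - 1) as / (k : ℚ) ^ a₁

open Finset

lemma hmul (n : ℚ) (c t : ℚ) (e : ℕ) : 1/n * (c/n^e * t) = c/n^(e+1) * t := by
  rw [pow_succ]; ring

lemma pf_rec (k m : ℚ) (hk : k ≠ 0) (hm : m ≠ 0) (hn : k + m ≠ 0) (c d : ℕ) :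
    (1:ℚ) / (k^(c+1) * m^(d+1)) =
      1/(k+m) * (1/(k^(c+1) * m^d) + 1/(k^c * m^(d+1))) := by
  field_simp; ring

lemma step1 (x n : ℚ) (A B : ℕ) :
    1/n * ((∑ j ∈ range (A+1+1), (Nat.choose (j+B) B : ℚ) / n^(j+B+1) * (1/x^(A+1+1-j)))
      + ∑ j ∈ range (A+1), (Nat.choose (j+(B+1)) (B+1) : ℚ) / n^(j+(B+1)+1) * (1/x^(A+1-j)))
    = ∑ j ∈ range (A+1+1), (Nat.choose (j+(B+1)) (B+1) : ℚ) / n^(j+(B+1)+1) * (1/x^(A+1+1-j)) := by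
  rw [Finset.sum_range_succ' (fun j => (Nat.choose (j+B) B : ℚ) / n^(j+B+1) * (1/x^(A+1+1-j))) (A+1),
      Finset.sum_range_succ' (fun j => (Nat.choose (j+(B+1)) (B+1) : ℚ) / n^(j+(B+1)+1) * (1/x^(A+1+1-j))) (A+1)]
  simp only [mul_add, Finset.mul_sum, hmul]
  rw [add_right_comm, ← Finset.sum_add_distrib]
  congr 1
  · apply Finset.sum_congr rfl
    intro j hj
    have h1 : A + 1 + 1 - (j+1) = A + 1 - j := by omega
    rw [h1]
    simp only [show j+1+B = j+B+1 from by omega, show j+1+(B+1) = j+B+1+1 from by omega,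
      show j+(B+1) = j+B+1 from by omega]
    rw [Nat.choose_succ_succ (j+B+1) B]
    push_cast
    ring
  · simp [Nat.choose_self]

lemma keyR : ∀ (A B k m : ℕ), 0 < k → 0 < m →
    (1:ℚ) / ((k:ℚ)^(A+1) * (m:ℚ)^(B+1)) =
      (∑ j ∈ range (A+1), (Nat.choose (j+B) B : ℚ) / ((k:ℚ)+(m:ℚ))^(j+B+1) * (1/(k:ℚ)^(A+1-j)))
    + ∑ j ∈ range (B+1), (Nat.choose (j+A) A : ℚ) / ((k:ℚ)+(m:ℚ))^(j+A+1) * (1/(m:ℚ)^(B+1-j)) := by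
  have base0 : ∀ (B k m : ℕ), 0 < k → 0 < m →
      (1:ℚ) / ((k:ℚ)^(0+1) * (m:ℚ)^(B+1)) =
        (∑ j ∈ range (0+1), (Nat.choose (j+B) B : ℚ) / ((k:ℚ)+(m:ℚ))^(j+B+1) * (1/(k:ℚ)^(0+1-j)))
      + ∑ j ∈ range (B+1), (Nat.choose (j+0) 0 : ℚ) / ((k:ℚ)+(m:ℚ))^(j+0+1) * (1/(m:ℚ)^(B+1-j)) := by
    intro B
    induction B with
    | zero =>
      intro k m hk hm
      have hk' : (k:ℚ) ≠ 0 := Nat.cast_ne_zero.2 hk.ne'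
      have hm' : (m:ℚ) ≠ 0 := Nat.cast_ne_zero.2 hm.ne'
      have hn : (k:ℚ)+(m:ℚ) ≠ 0 := by positivity
      simp [Finset.sum_range_one]
      field_simp
      ring
    | succ B ih =>
      intro k m hk hm
      have hk' : (k:ℚ) ≠ 0 := Nat.cast_ne_zero.2 hk.ne'
      have hm' : (m:ℚ) ≠ 0 := Nat.cast_ne_zero.2 hm.ne'
      have hn : (k:ℚ)+(m:ℚ) ≠ 0 := by positivity
      have hrec := pf_rec (k:ℚ) (m:ℚ) hk' hm' hn 0 (B+1)
      rw [hrec, ih k m hk hm]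
      rw [Finset.sum_range_succ' (fun j => (Nat.choose (j+0) 0 : ℚ) / ((k:ℚ)+(m:ℚ))^(j+0+1) * (1/(m:ℚ)^(B+1+1-j))) (B+1)]
      simp only [mul_add, Finset.mul_sum, hmul, Finset.sum_range_one]
      simp only [Nat.choose_zero_right, Nat.choose_self, Nat.zero_add, Nat.add_zero, Nat.cast_one]
      have e1 : ∀ j, B + 1 + 1 - (j+1) = B + 1 - j := fun j => by omega
      simp only [e1]
      simp [Finset.sum_range_one, Nat.choose_self]
      ring
  intro A
  induction A with
  | zero => exact base0
  | succ A ihA =>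
    intro B
    induction B with
    | zero =>
      intro k m hk hm
      have h := base0 (A+1) m k hm hk
      simp only [add_comm (m:ℚ) (k:ℚ)] at h
      rw [show (k:ℚ)^(A+1+1) * (m:ℚ)^(0+1) = (m:ℚ)^(0+1) * (k:ℚ)^(A+1+1) from mul_comm _ _]
      rw [h, add_comm]
    | succ B ihB =>
      intro k m hk hm
      have hk' : (k:ℚ) ≠ 0 := Nat.cast_ne_zero.2 hk.ne'
      have hm' : (m:ℚ) ≠ 0 := Nat.cast_ne_zero.2 hm.ne'
      have hn : (k:ℚ)+(m:ℚ) ≠ 0 := by positivity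
      have hrec := pf_rec (k:ℚ) (m:ℚ) hk' hm' hn (A+1) (B+1)
      rw [hrec, ihB k m hk hm, ihA (B+1) k m hk hm]
      have e : ∀ s1a s2a s1b s2b : ℚ,
          1/((k:ℚ)+(m:ℚ)) * ((s1a+s2a)+(s1b+s2b))
            = 1/((k:ℚ)+(m:ℚ))*(s1a+s1b) + 1/((k:ℚ)+(m:ℚ))*(s2b+s2a) := by
        intros; ring
      rw [e, step1 (k:ℚ) ((k:ℚ)+(m:ℚ)) A B, step1 (m:ℚ) ((k:ℚ)+(m:ℚ)) B A]


lemma sum_Icc_one (f : ℕ → ℚ) (a : ℕ) : ∑ i ∈ Icc 1 a, f i = ∑ j ∈ range a, f (1+j) := by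
  rw [show Icc 1 a = Ico 1 (a+1) by rw [Finset.Ico_add_one_right_eq_Icc], Finset.sum_Ico_eq_sum_range]
  simp

lemma keyIcc (a b k m : ℕ) (hk : 0 < k) (hm : 0 < m) (ha : 1 ≤ a) (hb : 1 ≤ b) :
    (1:ℚ) / ((k:ℚ)^a * (m:ℚ)^b) =
      (∑ i ∈ Icc 1 a, (Nat.choose (i+b-2) (b-1) : ℚ) / ((k:ℚ)+(m:ℚ))^(i+b-1) * (1/(k:ℚ)^(a+1-i)))
    + ∑ i ∈ Icc 1 b, (Nat.choose (i+a-2) (a-1) : ℚ) / ((k:ℚ)+(m:ℚ))^(i+a-1) * (1/(m:ℚ)^(b+1-i)) := by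
  obtain ⟨A, rfl⟩ : ∃ A, a = A + 1 := ⟨a - 1, by omega⟩
  obtain ⟨B, rfl⟩ : ∃ B, b = B + 1 := ⟨b - 1, by omega⟩
  rw [sum_Icc_one, sum_Icc_one, keyR A B k m hk hm]
  congr 1
  · apply Finset.sum_congr rfl
    intro j hj
    have e1 : 1 + j + (B+1) - 2 = j + B := by omega
    have e2 : B + 1 - 1 = B := by omega
    have e3 : 1 + j + (B+1) - 1 = j + B + 1 := by omega
    have e4 : A + 1 + 1 - (1 + j) = A + 1 - j := by omega
    rw [e1, e2, e3, e4]
  · apply Finset.sum_congr rfl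
    intro j hj
    have e1 : 1 + j + (A+1) - 2 = j + A := by omega
    have e2 : A + 1 - 1 = A := by omega
    have e3 : 1 + j + (A+1) - 1 = j + A + 1 := by omega
    have e4 : B + 1 + 1 - (1 + j) = B + 1 - j := by omega
    rw [e1, e2, e3, e4]


lemma tri_diag (N : ℕ) (f : ℕ → ℕ → ℚ) :
    ∑ k ∈ Icc 1 N, ∑ m ∈ Icc 1 (N-k), f k m
      = ∑ n ∈ Icc 1 N, ∑ k ∈ Icc 1 (n-1), f k (n-k) := by
  rw [Finset.sum_sigma', Finset.sum_sigma']
  apply Finset.sum_nbij' (i := fun p => (⟨p.1 + p.2, p.1⟩ : Σ _ : ℕ, ℕ))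
    (j := fun p => (⟨p.2, p.1 - p.2⟩ : Σ _ : ℕ, ℕ))
  · intro p hp
    simp only [Finset.mem_sigma, Finset.mem_Icc] at *
    omega
  · intro p hp
    simp only [Finset.mem_sigma, Finset.mem_Icc] at *
    omega
  · intro p hp
    simp only [Finset.mem_sigma, Finset.mem_Icc] at hp
    ext <;> simp <;> omega
  · intro p hp
    simp only [Finset.mem_sigma, Finset.mem_Icc] at hp
    ext <;> simp <;> omega
  · intro p hp
    simp only [Finset.mem_sigma, Finset.mem_Icc] at hp
    have : p.1 + p.2 - p.1 = p.2 := by omega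
    simp [this]

lemma tri_swap (N : ℕ) (f : ℕ → ℕ → ℚ) :
    ∑ k ∈ Icc 1 N, ∑ m ∈ Icc 1 (N-k), f k m
      = ∑ m ∈ Icc 1 N, ∑ k ∈ Icc 1 (N-m), f k m := by
  rw [Finset.sum_sigma', Finset.sum_sigma']
  apply Finset.sum_nbij' (i := fun p => (⟨p.2, p.1⟩ : Σ _ : ℕ, ℕ))
    (j := fun p => (⟨p.2, p.1⟩ : Σ _ : ℕ, ℕ))
  · intro p hp
    simp only [Finset.mem_sigma, Finset.mem_Icc] at *
    omega
  · intro p hp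
    simp only [Finset.mem_sigma, Finset.mem_Icc] at *
    omega
  · intro p hp; rfl
  · intro p hp; rfl
  · intro p hp; rfl

lemma icc_reflect (n : ℕ) (f : ℕ → ℚ) :
    ∑ m ∈ Icc 1 (n-1), f m = ∑ k ∈ Icc 1 (n-1), f (n-k) := by
  apply Finset.sum_nbij' (i := fun m => n - m) (j := fun k => n - k)
  · intro x hx; simp only [Finset.mem_Icc] at *; omega
  · intro x hx; simp only [Finset.mem_Icc] at *; omega
  · intro x hx; simp only [Finset.mem_Icc] at hx; omega
  · intro x hx; simp only [Finset.mem_Icc] at hx; omega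
  · intro x hx
    simp only [Finset.mem_Icc] at hx
    rw [show n - (n - x) = x by omega]

lemma zetaN_cons (N a : ℕ) (as : List ℕ) :
    zetaN N (a :: as) = ∑ n ∈ Finset.Icc 1 N, zetaN (n - 1) as / (n : ℚ) ^ a := rfl

lemma R_cons (N a₁ : ℕ) (as b : List ℕ) :
    R N (a₁ :: as) b = ∑ k ∈ Finset.Icc 1 N, zetaN (N - k) b * zetaN (k - 1) as / (k : ℚ) ^ a₁ := rfl

lemma R_nil (N : ℕ) (b : List ℕ) : R N [] b = zetaN N b := rfl

lemma R_eq (M : ℕ) (as : List ℕ) (c : ℕ) (cs : List ℕ) :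
    R M as (c :: cs) = ∑ m ∈ Finset.Icc 1 M, zetaN (m-1) cs / (m:ℚ)^c * zetaN (M-m) as := by
  cases as with
  | nil =>
    rw [R_nil, zetaN_cons]
    apply Finset.sum_congr rfl
    intro m hm
    simp [zetaN]
  | cons a₂ as' =>
    rw [R_cons]
    have e1 : ∀ k, zetaN (M-k) (c::cs) * zetaN (k-1) as' / (k:ℚ)^a₂
        = ∑ m ∈ Finset.Icc 1 (M-k), zetaN (m-1) cs / (m:ℚ)^c * (zetaN (k-1) as' / (k:ℚ)^a₂) := by
      intro k
      rw [zetaN_cons, Finset.sum_mul, Finset.sum_div]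
      apply Finset.sum_congr rfl
      intro m hm
      ring
    rw [Finset.sum_congr rfl (fun k _ => e1 k)]
    rw [tri_swap M (fun k m => zetaN (m-1) cs / (m:ℚ)^c * (zetaN (k-1) as' / (k:ℚ)^a₂))]
    apply Finset.sum_congr rfl
    intro m hm
    rw [zetaN_cons, Finset.mul_sum]

/-- The recurrence relation for `R_N(a;b)`. -/
theorem R_recurrence (N : ℕ) (a₁ b₁ : ℕ) (as bs : List ℕ)
    (ha : ∀ x ∈ a₁ :: as, 1 ≤ x) (hb : ∀ x ∈ b₁ :: bs, 1 ≤ x) :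
    R N (a₁ :: as) (b₁ :: bs) =
      (∑ i ∈ Finset.Icc 1 a₁, ∑ n ∈ Finset.Icc 1 N,
        (Nat.choose (i + b₁ - 2) (b₁ - 1) : ℚ) / (n : ℚ) ^ (i + b₁ - 1) *
          R (n - 1) ((a₁ + 1 - i) :: as) bs)
      + ∑ i ∈ Finset.Icc 1 b₁, ∑ n ∈ Finset.Icc 1 N,
        (Nat.choose (i + a₁ - 2) (a₁ - 1) : ℚ) / (n : ℚ) ^ (i + a₁ - 1) *
          R (n - 1) as ((b₁ + 1 - i) :: bs) := by
  have ha₁ : 1 ≤ a₁ := ha _ (by simp)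
  have hb₁ : 1 ≤ b₁ := hb _ (by simp)
  -- LHS as a double sum over the triangle
  have hLHS : R N (a₁ :: as) (b₁ :: bs)
      = ∑ n ∈ Icc 1 N, ∑ k ∈ Icc 1 (n-1),
          zetaN (n-k-1) bs / ((n-k : ℕ):ℚ)^b₁ * (zetaN (k-1) as / (k:ℚ)^a₁) := by
    rw [R_cons]
    have e1 : ∀ k, zetaN (N-k) (b₁::bs) * zetaN (k-1) as / (k:ℚ)^a₁
        = ∑ m ∈ Icc 1 (N-k), zetaN (m-1) bs / (m:ℚ)^b₁ * (zetaN (k-1) as / (k:ℚ)^a₁) := by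
      intro k
      rw [zetaN_cons, Finset.sum_mul, Finset.sum_div]
      apply Finset.sum_congr rfl
      intro m hm
      ring
    rw [Finset.sum_congr rfl (fun k _ => e1 k)]
    exact tri_diag N (fun k m => zetaN (m-1) bs / (m:ℚ)^b₁ * (zetaN (k-1) as / (k:ℚ)^a₁))
  -- first RHS sum
  have hR1 : (∑ i ∈ Finset.Icc 1 a₁, ∑ n ∈ Finset.Icc 1 N,
        (Nat.choose (i + b₁ - 2) (b₁ - 1) : ℚ) / (n : ℚ) ^ (i + b₁ - 1) *
          R (n - 1) ((a₁ + 1 - i) :: as) bs)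
      = ∑ n ∈ Icc 1 N, ∑ k ∈ Icc 1 (n-1), ∑ i ∈ Icc 1 a₁,
          (Nat.choose (i + b₁ - 2) (b₁ - 1) : ℚ) / (n : ℚ) ^ (i + b₁ - 1) *
            (zetaN (n-k-1) bs * zetaN (k-1) as / (k:ℚ)^(a₁+1-i)) := by
    rw [Finset.sum_comm]
    apply Finset.sum_congr rfl
    intro n hn
    have e2 : ∀ i, (Nat.choose (i + b₁ - 2) (b₁ - 1) : ℚ) / (n : ℚ) ^ (i + b₁ - 1) *
          R (n - 1) ((a₁ + 1 - i) :: as) bs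
        = ∑ k ∈ Icc 1 (n-1), (Nat.choose (i + b₁ - 2) (b₁ - 1) : ℚ) / (n : ℚ) ^ (i + b₁ - 1) *
            (zetaN (n-k-1) bs * zetaN (k-1) as / (k:ℚ)^(a₁+1-i)) := by
      intro i
      rw [R_cons, Finset.mul_sum]
      apply Finset.sum_congr rfl
      intro k hk
      rw [show n-1-k = n-k-1 from by omega]
    rw [Finset.sum_congr rfl (fun i _ => e2 i), Finset.sum_comm]
  -- second RHS sum
  have hR2 : (∑ i ∈ Finset.Icc 1 b₁, ∑ n ∈ Finset.Icc 1 N,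
        (Nat.choose (i + a₁ - 2) (a₁ - 1) : ℚ) / (n : ℚ) ^ (i + a₁ - 1) *
          R (n - 1) as ((b₁ + 1 - i) :: bs))
      = ∑ n ∈ Icc 1 N, ∑ k ∈ Icc 1 (n-1), ∑ i ∈ Icc 1 b₁,
          (Nat.choose (i + a₁ - 2) (a₁ - 1) : ℚ) / (n : ℚ) ^ (i + a₁ - 1) *
            (zetaN (n-k-1) bs / ((n-k : ℕ):ℚ)^(b₁+1-i) * zetaN (k-1) as) := by
    rw [Finset.sum_comm]
    apply Finset.sum_congr rfl
    intro n hn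
    have e3 : ∀ i, (Nat.choose (i + a₁ - 2) (a₁ - 1) : ℚ) / (n : ℚ) ^ (i + a₁ - 1) *
          R (n - 1) as ((b₁ + 1 - i) :: bs)
        = ∑ k ∈ Icc 1 (n-1), (Nat.choose (i + a₁ - 2) (a₁ - 1) : ℚ) / (n : ℚ) ^ (i + a₁ - 1) *
            (zetaN (n-k-1) bs / ((n-k : ℕ):ℚ)^(b₁+1-i) * zetaN (k-1) as) := by
      intro i
      rw [R_eq]
      have e4 : (∑ m ∈ Icc 1 (n-1), zetaN (m-1) bs / (m:ℚ)^(b₁+1-i) * zetaN (n-1-m) as)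
          = ∑ k ∈ Icc 1 (n-1), zetaN (n-k-1) bs / ((n-k : ℕ):ℚ)^(b₁+1-i) * zetaN (k-1) as := by
        refine (icc_reflect n (fun m => zetaN (m-1) bs / (m:ℚ)^(b₁+1-i) * zetaN (n-1-m) as)).trans ?_
        apply Finset.sum_congr rfl
        intro k hk
        simp only [Finset.mem_Icc] at hk
        show zetaN (n-k-1) bs / ((n-k : ℕ):ℚ)^(b₁+1-i) * zetaN (n-1-(n-k)) as = _
        rw [show n-1-(n-k) = k-1 from by omega]
      rw [e4, Finset.mul_sum]
    rw [Finset.sum_congr rfl (fun i _ => e3 i), Finset.sum_comm]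
  rw [hLHS, hR1, hR2, ← Finset.sum_add_distrib]
  apply Finset.sum_congr rfl
  intro n hn
  rw [← Finset.sum_add_distrib]
  apply Finset.sum_congr rfl
  intro k hk
  simp only [Finset.mem_Icc] at hn hk
  have hk1 : 0 < k := hk.1
  have hm1 : 0 < n - k := by omega
  have h := keyIcc a₁ b₁ k (n-k) hk1 hm1 ha₁ hb₁
  have hcast : (k:ℚ) + ((n-k : ℕ):ℚ) = (n:ℚ) := by
    have h5 : k + (n - k) = n := by omega
    exact_mod_cast congrArg (fun x : ℕ => (x:ℚ)) h5
  rw [hcast] at h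
  calc zetaN (n-k-1) bs / ((n-k : ℕ):ℚ)^b₁ * (zetaN (k-1) as / (k:ℚ)^a₁)
      = (zetaN (n-k-1) bs * zetaN (k-1) as) * ((1:ℚ) / ((k:ℚ)^a₁ * ((n-k : ℕ):ℚ)^b₁)) := by
        ring
    _ = (zetaN (n-k-1) bs * zetaN (k-1) as) *
        ((∑ i ∈ Icc 1 a₁, (Nat.choose (i+b₁-2) (b₁-1) : ℚ) / (n:ℚ)^(i+b₁-1) * (1/(k:ℚ)^(a₁+1-i)))
          + ∑ i ∈ Icc 1 b₁, (Nat.choose (i+a₁-2) (a₁-1) : ℚ) / (n:ℚ)^(i+a₁-1) * (1/((n-k : ℕ):ℚ)^(b₁+1-i))) := by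
        rw [h]
    _ = _ := by
        rw [mul_add, Finset.mul_sum, Finset.mul_sum]
        congr 1
        · apply Finset.sum_congr rfl
          intro i hi
          ring
        · apply Finset.sum_congr rfl
          intro i hi
          ring
end

section
/- For words A = ω_0^{a-1} ω_1 and B = ω_0^{b-1} ω_1 over the two-letter alphabet {ω_0, ω_1}, their shuffle product satisfies A ⧢ B = Σ_{i=0}^{a-1} C(b-1+i, b-1) ω_0^{b-1+i} ω_1 ω_0^{a-1-i} ω_1 + Σ_{i=0}^{b-1} C(a-1+i, a-1) ω_0^{a-1+i} ω_1 ω_0^{b-1-i} ω_1. -/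
/-- The shuffle product of two words, as a multiset of words (counting multiplicities). -/
def shuffle {α : Type*} : List α → List α → Multiset (List α)
  | [], ys => {ys}
  | xs, [] => {xs}
  | x :: xs, y :: ys =>
      ((shuffle xs (y :: ys)).map (x :: ·)) + ((shuffle (x :: xs) ys).map (y :: ·))
termination_by xs ys => xs.length + ys.length

lemma shuffle_nil_left {α : Type*} (ys : List α) : shuffle [] ys = {ys} := by
  rw [shuffle]

lemma shuffle_nil_right {α : Type*} (xs : List α) : shuffle xs [] = {xs} := by
  cases xs <;> (rw [shuffle]; try simp)

lemma shuffle_cons_cons {α : Type*} (x y : α) (xs ys : List α) :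
    shuffle (x :: xs) (y :: ys) =
      ((shuffle xs (y :: ys)).map (x :: ·)) + ((shuffle (x :: xs) ys).map (y :: ·)) := by
  rw [shuffle]

lemma map_sum_smul {α β : Type*} (g : α → β) (s : Finset ℕ) (c : ℕ → ℕ) (h : ℕ → Multiset α) :
    Multiset.map g (∑ i ∈ s, c i • h i) = ∑ i ∈ s, c i • Multiset.map g (h i) := by
  classical
  induction s using Finset.induction with
  | empty => simp
  | insert _ _ hx ih => simp [Finset.sum_insert hx, Multiset.map_nsmul, ih]

lemma map_sum_ms {α β : Type*} (g : α → β) (s : Finset ℕ) (h : ℕ → Multiset α) :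
    Multiset.map g (∑ i ∈ s, h i) = ∑ i ∈ s, Multiset.map g (h i) := by
  classical
  induction s using Finset.induction with
  | empty => simp
  | insert _ _ hx ih => simp [Finset.sum_insert hx, ih]

/-- The word `ω₀^m ω₁`. -/
def W (m : ℕ) : List Bool := List.replicate m false ++ [true]

lemma W_succ (m : ℕ) : W (m + 1) = false :: W m := by
  simp [W, List.replicate_succ]

lemma cons_W (k l : ℕ) : (false :: (W k ++ W l) : List Bool) = W (k + 1) ++ W l := by
  simp [W_succ]

/-- The right-hand side of the basic shuffle identity, in terms of `m = a - 1`, `n = b - 1`. -/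
def RHS (m n : ℕ) : Multiset (List Bool) :=
  (∑ i ∈ Finset.range (m + 1), (n + i).choose n • ({W (n + i) ++ W (m - i)} : Multiset (List Bool)))
  + ∑ i ∈ Finset.range (n + 1), (m + i).choose m • ({W (m + i) ++ W (n - i)} : Multiset (List Bool))

/-- Pascal-style recursion for weighted sums, in any commutative monoid. -/
lemma key {M : Type*} [AddCommMonoid M] (k c : ℕ) (f : ℕ → M) :
    ∑ i ∈ Finset.range (k + 2), (c + 1 + i).choose (c + 1) • f i
      = (∑ i ∈ Finset.range (k + 1), (c + 1 + i).choose (c + 1) • f (i + 1))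
      + ∑ i ∈ Finset.range (k + 2), (c + i).choose c • f i := by
  rw [Finset.sum_range_succ' (fun i => (c + 1 + i).choose (c + 1) • f i),
      Finset.sum_range_succ' (fun i => (c + i).choose c • f i)]
  simp only [Nat.add_zero, Nat.choose_self]
  have h : ∀ i ∈ Finset.range (k + 1),
      (c + 1 + (i + 1)).choose (c + 1) • f (i + 1)
        = (c + 1 + i).choose (c + 1) • f (i + 1) + (c + (i + 1)).choose c • f (i + 1) := by
    intro i _
    rw [show c + (i + 1) = c + 1 + i by ring, show c + 1 + (i + 1) = (c + 1 + i) + 1 by ring,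
      Nat.choose_succ_succ, add_smul, add_comm]
  rw [Finset.sum_congr rfl h, Finset.sum_add_distrib]
  abel

lemma RHS_zero_zero : RHS 0 0 = ({W 0 ++ W 0} : Multiset (List Bool)) + {W 0 ++ W 0} := by
  simp [RHS]

lemma RHS_zero_succ (n : ℕ) :
    RHS 0 (n + 1) = ({W 0 ++ W (n + 1)} : Multiset (List Bool))
      + Multiset.map (false :: ·) (RHS 0 n) := by
  simp only [RHS, Multiset.map_add, map_sum_smul, Multiset.map_singleton, cons_W,
    Nat.zero_add, Nat.choose_zero_right, Nat.choose_self, one_smul, Nat.sub_zero,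
    Nat.zero_sub, Nat.add_zero]
  rw [Finset.sum_range_one, Finset.sum_range_one]
  rw [Finset.sum_range_succ' (fun i => ({W i ++ W (n + 1 - i)} : Multiset (List Bool)))]
  simp only [Nat.succ_sub_succ, Nat.add_zero, Nat.sub_zero, map_sum_ms,
    Multiset.map_singleton, cons_W, Nat.choose_self, one_smul]
  abel

lemma RHS_succ_zero (m : ℕ) :
    RHS (m + 1) 0 = Multiset.map (false :: ·) (RHS m 0)
      + ({W 0 ++ W (m + 1)} : Multiset (List Bool)) := by
  simp only [RHS, Multiset.map_add, map_sum_smul, Multiset.map_singleton, cons_W,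
    Nat.zero_add, Nat.choose_zero_right, Nat.choose_self, one_smul, Nat.sub_zero,
    Nat.add_zero]
  rw [Finset.sum_range_one, Finset.sum_range_one]
  rw [Finset.sum_range_succ' (fun i => ({W i ++ W (m + 1 - i)} : Multiset (List Bool)))]
  simp only [Nat.succ_sub_succ, Nat.add_zero, Nat.sub_zero, map_sum_ms,
    Multiset.map_singleton, cons_W, Nat.choose_self, one_smul]
  abel

lemma RHS_succ_succ (m n : ℕ) :
    RHS (m + 1) (n + 1) = Multiset.map (false :: ·) (RHS m (n + 1))
      + Multiset.map (false :: ·) (RHS (m + 1) n) := by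
  simp only [RHS, Multiset.map_add, map_sum_smul, Multiset.map_singleton, cons_W]
  rw [key m n (fun i => ({W (n + 1 + i) ++ W (m + 1 - i)} : Multiset (List Bool))),
      key n m (fun i => ({W (m + 1 + i) ++ W (n + 1 - i)} : Multiset (List Bool)))]
  have h1 : ∑ i ∈ Finset.range (m + 1), (n + 1 + i).choose (n + 1) •
        ({W (n + 1 + (i + 1)) ++ W (m + 1 - (i + 1))} : Multiset (List Bool))
      = ∑ i ∈ Finset.range (m + 1), (n + 1 + i).choose (n + 1) •
        ({W (n + 1 + i + 1) ++ W (m - i)} : Multiset (List Bool)) :=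
    Finset.sum_congr rfl fun i _ => by
      rw [show m + 1 - (i + 1) = m - i by omega, show n + 1 + (i + 1) = n + 1 + i + 1 by omega]
  have h2 : ∑ i ∈ Finset.range (m + 2), (n + i).choose n •
        ({W (n + 1 + i) ++ W (m + 1 - i)} : Multiset (List Bool))
      = ∑ i ∈ Finset.range (m + 1 + 1), (n + i).choose n •
        ({W (n + i + 1) ++ W (m + 1 - i)} : Multiset (List Bool)) :=
    Finset.sum_congr (by norm_num) fun i _ => by rw [show n + 1 + i = n + i + 1 by omega]
  have h3 : ∑ i ∈ Finset.range (n + 1), (m + 1 + i).choose (m + 1) •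
        ({W (m + 1 + (i + 1)) ++ W (n + 1 - (i + 1))} : Multiset (List Bool))
      = ∑ i ∈ Finset.range (n + 1), (m + 1 + i).choose (m + 1) •
        ({W (m + 1 + i + 1) ++ W (n - i)} : Multiset (List Bool)) :=
    Finset.sum_congr rfl fun i _ => by
      rw [show n + 1 - (i + 1) = n - i by omega, show m + 1 + (i + 1) = m + 1 + i + 1 by omega]
  have h4 : ∑ i ∈ Finset.range (n + 2), (m + i).choose m •
        ({W (m + 1 + i) ++ W (n + 1 - i)} : Multiset (List Bool))
      = ∑ i ∈ Finset.range (n + 1 + 1), (m + i).choose m •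
        ({W (m + i + 1) ++ W (n + 1 - i)} : Multiset (List Bool)) :=
    Finset.sum_congr (by norm_num) fun i _ => by rw [show m + 1 + i = m + i + 1 by omega]
  rw [h1, h2, h3, h4]
  abel

lemma main_shuffle : ∀ m n, shuffle (W m) (W n) = RHS m n := by
  intro m
  induction m with
  | zero =>
    intro n
    induction n with
    | zero =>
      rw [RHS_zero_zero]
      show shuffle [true] [true] = _
      rw [shuffle_cons_cons, shuffle_nil_left, shuffle_nil_right]
      simp [W]
    | succ n ihn =>
      rw [RHS_zero_succ, ← ihn, W_succ]
      show shuffle [true] (false :: W n) = _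
      rw [shuffle_cons_cons, shuffle_nil_left]
      simp [W, W_succ]
      try abel
  | succ m ihm =>
    intro n
    induction n with
    | zero =>
      rw [RHS_succ_zero, ← ihm, W_succ]
      show shuffle (false :: W m) [true] = _
      rw [shuffle_cons_cons, shuffle_nil_right]
      simp [W, W_succ]
      try abel
    | succ n ihn =>
      rw [RHS_succ_succ, ← ihm, ← ihn, W_succ m, W_succ n]
      exact shuffle_cons_cons false false (W m) (W n)

/-- The basic shuffle identity for the words `ω₀^{a-1} ω₁` and `ω₀^{b-1} ω₁`
(here `ω₀ = false`, `ω₁ = true`), with multiplicities given by binomial coefficients. -/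
theorem basic_shuffle (a b : ℕ) (ha : 1 ≤ a) (hb : 1 ≤ b) :
    shuffle (List.replicate (a - 1) false ++ [true]) (List.replicate (b - 1) false ++ [true]) =
      (∑ i ∈ Finset.range a, Nat.choose (b - 1 + i) (b - 1) •
          ({List.replicate (b - 1 + i) false ++ [true] ++
            List.replicate (a - 1 - i) false ++ [true]} : Multiset (List Bool)))
      + ∑ i ∈ Finset.range b, Nat.choose (a - 1 + i) (a - 1) •
          ({List.replicate (a - 1 + i) false ++ [true] ++
            List.replicate (b - 1 - i) false ++ [true]} : Multiset (List Bool)) := by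
  obtain ⟨m, rfl⟩ : ∃ m, a = m + 1 := ⟨a - 1, by omega⟩
  obtain ⟨n, rfl⟩ : ∃ n, b = n + 1 := ⟨b - 1, by omega⟩
  have h := main_shuffle m n
  simp only [W, RHS] at h
  simpa [Nat.add_sub_cancel, List.append_assoc] using h
end

section
/- The shuffle identity for multiple zeta values: for convergent multi-indices a, b (a_1, b_1 ≥ 2), ζ(a) ζ(b) = ζ(a ⧢ b), where ζ is extended linearly over the words appearing in the shuffle product a ⧢ b. (All words in a ⧢ b begin with ω_0, so are again convergent.) -/
open Filter Topology

/-- The word `ω₀^{a₁-1} ω₁ ⋯ ω₀^{a_r-1} ω₁` over `{ω₀, ω₁} = {false, true}`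
associated to a multi-index. -/
def wordOf (a : List ℕ) : List Bool :=
  a.foldr (fun c w => List.replicate (c - 1) false ++ [true] ++ w) []

/-- The multi-index associated to a word over `{ω₀, ω₁} = {false, true}`
(inverse of `wordOf` on admissible words). -/
def wordToIndex : List Bool → List ℕ
  | [] => []
  | false :: w =>
      match wordToIndex w with
      | [] => []
      | c :: cs => (c + 1) :: cs
  | true :: w => 1 :: wordToIndex w

namespace MzvAux

lemma shuffle_nil_left {α : Type*} (v : List α) : shuffle [] v = {v} := by rw [shuffle]

lemma shuffle_nil_right {α : Type*} (x : α) (xs : List α) :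
    shuffle (x :: xs) [] = {x :: xs} := by rw [shuffle]; simp

lemma shuffle_cons_cons {α : Type*} (x y : α) (xs ys : List α) :
    shuffle (x :: xs) (y :: ys) =
      ((shuffle xs (y :: ys)).map (x :: ·)) + ((shuffle (x :: xs) ys).map (y :: ·)) := by
  rw [shuffle]

/-- Coefficient sequence of the multiple polylogarithm attached to a word. -/
def c : List Bool → ℕ → ℚ
  | [], n => if n = 0 then 1 else 0
  | false :: w, n => c w n / n
  | true :: w, n => (∑ m ∈ Finset.range n, c w m) / n

/-- Words ending in `true` (= ω₁). -/
inductive ET : List Bool → Prop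
  | single : ET [true]
  | cons (x : Bool) {w : List Bool} : ET w → ET (x :: w)

lemma ET.ne_nil {w : List Bool} (h : ET w) : w ≠ [] := by cases h <;> simp

lemma ET.of_cons {x : Bool} {w : List Bool} (h : ET (x :: w)) : w = [] ∨ ET w := by
  cases h with
  | single => exact Or.inl rfl
  | cons _ h => exact Or.inr h

lemma ET.of_false_cons {w : List Bool} (h : ET (false :: w)) : ET w := by
  cases h with
  | cons _ h => exact h

lemma c_zero {w : List Bool} (h : w ≠ []) : c w 0 = 0 := by
  match w with
  | false :: w => simp [c]
  | true :: w => simp [c]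

lemma c_nonneg (w : List Bool) (n : ℕ) : 0 ≤ c w n := by
  induction w generalizing n with
  | nil => simp only [c]; split <;> norm_num
  | cons x w ih =>
    cases x
    · exact div_nonneg (ih n) (Nat.cast_nonneg n)
    · exact div_nonneg (Finset.sum_nonneg fun m _ => ih m) (Nat.cast_nonneg n)

lemma mul_c_false {w : List Bool} (hw : w ≠ []) (k : ℕ) :
    (k : ℚ) * c (false :: w) k = c w k := by
  rcases Nat.eq_zero_or_pos k with rfl | hk
  · simp [c_zero hw]
  · have : (k : ℚ) ≠ 0 := Nat.cast_ne_zero.mpr hk.ne'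
    simp only [c]
    field_simp

lemma mul_c_false_pos (w : List Bool) {k : ℕ} (hk : k ≠ 0) :
    (k : ℚ) * c (false :: w) k = c w k := by
  have : (k : ℚ) ≠ 0 := Nat.cast_ne_zero.mpr hk
  simp only [c]
  field_simp

lemma mul_c_true (w : List Bool) (k : ℕ) :
    (k : ℚ) * c (true :: w) k = ∑ m ∈ Finset.range k, c w m := by
  rcases Nat.eq_zero_or_pos k with rfl | hk
  · simp
  · have : (k : ℚ) ≠ 0 := Nat.cast_ne_zero.mpr hk.ne'
    simp only [c]
    field_simp

lemma multiset_sum_comm {γ β : Type*} (S : Multiset γ) (r : Finset β) (f : γ → β → ℚ) :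
    (S.map (fun w => ∑ m ∈ r, f w m)).sum = ∑ m ∈ r, (S.map (fun w => f w m)).sum := by
  induction S using Multiset.induction_on with
  | empty => simp
  | cons a S ih => simp [ih, Finset.sum_add_distrib]

lemma ET.shuffle {u v : List Bool} (hu : u = [] ∨ ET u) (hv : v = [] ∨ ET v)
    (hne : ¬(u = [] ∧ v = [])) : ∀ w ∈ shuffle u v, ET w := by
  match u, v with
  | [], v =>
    intro w hw
    rw [shuffle_nil_left] at hw
    simp at hw
    subst hw
    rcases hv with rfl | hv
    · exact absurd ⟨rfl, rfl⟩ hne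
    · exact hv
  | x :: xs, [] =>
    intro w hw
    rw [shuffle_nil_right] at hw
    simp at hw
    subst hw
    rcases hu with h | hu
    · exact absurd h (by simp)
    · exact hu
  | x :: xs, y :: ys =>
    intro w hw
    rw [shuffle_cons_cons] at hw
    simp only [Multiset.mem_add, Multiset.mem_map] at hw
    have hu' : ET (x :: xs) := hu.resolve_left (by simp)
    have hv' : ET (y :: ys) := hv.resolve_left (by simp)
    rcases hw with ⟨w', hw', rfl⟩ | ⟨w', hw', rfl⟩
    · exact ET.cons x (ET.shuffle hu'.of_cons (Or.inr hv') (by simp) w' hw')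
    · exact ET.cons y (ET.shuffle (Or.inr hu') hv'.of_cons (by simp) w' hw')
termination_by u.length + v.length

/-- key double-sum reindexing. -/
lemma sum_triangle (a b : ℕ → ℚ) (n : ℕ) :
    ∑ k ∈ Finset.range (n + 1), (∑ m ∈ Finset.range k, a m) * b (n - k) =
      ∑ m ∈ Finset.range n, ∑ k ∈ Finset.range (m + 1), a k * b (m - k) := by
  induction n with
  | zero => simp
  | succ n ih =>
    rw [Finset.sum_range_succ' (fun k => (∑ m ∈ Finset.range k, a m) * b (n + 1 - k)) (n + 1)]
    simp only [Finset.range_zero, Finset.sum_empty, zero_mul, add_zero, Nat.succ_sub_succ]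
    have step : ∀ j, (∑ m ∈ Finset.range (j + 1), a m) * b (n - j)
        = (∑ m ∈ Finset.range j, a m) * b (n - j) + a j * b (n - j) := fun j => by
      rw [Finset.sum_range_succ, add_mul]
    rw [Finset.sum_congr rfl fun j _ => step j, Finset.sum_add_distrib, ih]
    conv_rhs => rw [Finset.sum_range_succ]

/-- mirrored double-sum reindexing. -/
lemma sum_triangle' (a b : ℕ → ℚ) (n : ℕ) :
    ∑ k ∈ Finset.range (n + 1), a k * (∑ m ∈ Finset.range (n - k), b m) =
      ∑ m ∈ Finset.range n, ∑ k ∈ Finset.range (m + 1), a k * b (m - k) := by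
  induction n with
  | zero => simp
  | succ n ih =>
    rw [Finset.sum_range_succ (fun k => a k * ∑ m ∈ Finset.range (n + 1 - k), b m) (n + 1)]
    simp only [Nat.sub_self, Finset.range_zero, Finset.sum_empty, mul_zero, add_zero]
    have step : ∀ j ∈ Finset.range (n + 1), a j * (∑ m ∈ Finset.range (n + 1 - j), b m)
        = a j * (∑ m ∈ Finset.range (n - j), b m) + a j * b (n - j) := by
      intro j hj
      simp only [Finset.mem_range] at hj
      have : n + 1 - j = (n - j) + 1 := by omega
      rw [this, Finset.sum_range_succ, mul_add]
    rw [Finset.sum_congr rfl step, Finset.sum_add_distrib, ih, Finset.sum_range_succ]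
    conv_rhs => rw [Finset.sum_range_succ, Finset.sum_range_succ (fun k => a k * b (n - k)) n]

/-- The central combinatorial identity: the coefficients of the shuffle sum
are the Cauchy product of the coefficients. -/
lemma key (u v : List Bool) (hu : u = [] ∨ ET u) (hv : v = [] ∨ ET v) (n : ℕ) :
    ((shuffle u v).map (fun w => c w n)).sum =
      ∑ k ∈ Finset.range (n + 1), c u k * c v (n - k) := by
  match u, v with
  | [], v =>
    rw [shuffle_nil_left]
    simp only [Multiset.map_singleton, Multiset.sum_singleton]
    rw [Finset.sum_eq_single 0]
    · simp [c]
    · intro k _ hk; simp [c, hk]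
    · simp
  | x :: xs, [] =>
    rw [shuffle_nil_right]
    simp only [Multiset.map_singleton, Multiset.sum_singleton]
    rw [Finset.sum_eq_single n]
    · simp [c]
    · intro k hk hkn
      have : n - k ≠ 0 := by
        simp only [Finset.mem_range] at hk
        omega
      simp [c, this]
    · simp
  | x :: xs, y :: ys =>
    have hu' : ET (x :: xs) := hu.resolve_left (by simp)
    have hv' : ET (y :: ys) := hv.resolve_left (by simp)
    rw [shuffle_cons_cons]
    rw [Multiset.map_add, Multiset.sum_add, Multiset.map_map, Multiset.map_map]
    simp only [Function.comp]
    -- both sides times n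
    rcases Nat.eq_zero_or_pos n with rfl | hn
    · -- n = 0 : everything vanishes
      have h1 : ∀ w ∈ shuffle xs (y :: ys), c (x :: w) 0 = 0 := fun w _ => c_zero (by simp)
      have h2 : ∀ w ∈ shuffle (x :: xs) ys, c (y :: w) 0 = 0 := fun w _ => c_zero (by simp)
      rw [Multiset.sum_eq_zero, Multiset.sum_eq_zero]
      · rw [Finset.sum_eq_single 0] <;> simp [c_zero (show (x :: xs) ≠ [] by simp)]
      · intro q hq
        simp only [Multiset.mem_map, Function.comp] at hq
        obtain ⟨w, hw, rfl⟩ := hq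
        exact h2 w hw
      · intro q hq
        simp only [Multiset.mem_map, Function.comp] at hq
        obtain ⟨w, hw, rfl⟩ := hq
        exact h1 w hw
    · have hn' : (n : ℚ) ≠ 0 := by positivity
      apply mul_left_cancel₀ hn'
      rw [mul_add]
      -- left pieces
      have hLx : (n : ℚ) * (Multiset.map (fun w => c (x :: w) n) (shuffle xs (y :: ys))).sum =
          (Multiset.map (fun w => (n : ℚ) * c (x :: w) n) (shuffle xs (y :: ys))).sum := by
        rw [Multiset.sum_map_mul_left]
      have key1 : ∀ m, ((shuffle xs (y :: ys)).map (fun w => c w m)).sum =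
          ∑ k ∈ Finset.range (m + 1), c xs k * c (y :: ys) (m - k) := fun m =>
        key xs (y :: ys) hu'.of_cons (Or.inr hv') m
      have key2 : ∀ m, ((shuffle (x :: xs) ys).map (fun w => c w m)).sum =
          ∑ k ∈ Finset.range (m + 1), c (x :: xs) k * c ys (m - k) := fun m =>
        key (x :: xs) ys (Or.inr hu') hv'.of_cons m
      have h₁ : (n : ℚ) * (Multiset.map (fun w => c (x :: w) n) (shuffle xs (y :: ys))).sum =
          ∑ k ∈ Finset.range (n + 1), ((k : ℚ) * c (x :: xs) k) * c (y :: ys) (n - k) := by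
        rw [hLx]
        cases x with
        | false =>
          have hxs : xs ≠ [] := (hu'.of_false_cons).ne_nil
          have e1 : (Multiset.map (fun w => (n : ℚ) * c (false :: w) n)
              (shuffle xs (y :: ys))) = (Multiset.map (fun w => c w n) (shuffle xs (y :: ys))) :=
            Multiset.map_congr rfl fun w _ => mul_c_false_pos w hn.ne'
          rw [e1, key1 n]
          exact Finset.sum_congr rfl fun k _ => by rw [mul_c_false hxs]
        | true =>
          have e1 : (Multiset.map (fun w => (n : ℚ) * c (true :: w) n)
              (shuffle xs (y :: ys))) =
              (Multiset.map (fun w => ∑ m ∈ Finset.range n, c w m) (shuffle xs (y :: ys))) :=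
            Multiset.map_congr rfl fun w _ => mul_c_true w n
          rw [e1, multiset_sum_comm]
          have e2 : ∀ k : ℕ, ((k : ℚ) * c (true :: xs) k) * c (y :: ys) (n - k) =
              (∑ m ∈ Finset.range k, c xs m) * c (y :: ys) (n - k) := fun k => by
            rw [mul_c_true]
          rw [Finset.sum_congr rfl fun k _ => e2 k, sum_triangle]
          exact Finset.sum_congr rfl fun m _ => by rw [key1 m]
      have hLy : (n : ℚ) * (Multiset.map (fun w => c (y :: w) n) (shuffle (x :: xs) ys)).sum =
          (Multiset.map (fun w => (n : ℚ) * c (y :: w) n) (shuffle (x :: xs) ys)).sum := by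
        rw [Multiset.sum_map_mul_left]
      have h₂ : (n : ℚ) * (Multiset.map (fun w => c (y :: w) n) (shuffle (x :: xs) ys)).sum =
          ∑ k ∈ Finset.range (n + 1), c (x :: xs) k * (((n - k : ℕ) : ℚ) * c (y :: ys) (n - k)) := by
        rw [hLy]
        cases y with
        | false =>
          have hys : ys ≠ [] := (hv'.of_false_cons).ne_nil
          have e1 : (Multiset.map (fun w => (n : ℚ) * c (false :: w) n)
              (shuffle (x :: xs) ys)) =
              (Multiset.map (fun w => c w n) (shuffle (x :: xs) ys)) :=
            Multiset.map_congr rfl fun w _ => mul_c_false_pos w hn.ne'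
          rw [e1, key2 n]
          exact Finset.sum_congr rfl fun k _ => by rw [mul_c_false hys]
        | true =>
          have e1 : (Multiset.map (fun w => (n : ℚ) * c (true :: w) n)
              (shuffle (x :: xs) ys)) =
              (Multiset.map (fun w => ∑ m ∈ Finset.range n, c w m) (shuffle (x :: xs) ys)) :=
            Multiset.map_congr rfl fun w _ => mul_c_true w n
          rw [e1, multiset_sum_comm]
          have e2 : ∀ k : ℕ, c (x :: xs) k * (((n - k : ℕ) : ℚ) * c (true :: ys) (n - k)) =
              c (x :: xs) k * (∑ m ∈ Finset.range (n - k), c ys m) := fun k => by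
            rw [mul_c_true]
          rw [Finset.sum_congr rfl fun k _ => e2 k, sum_triangle']
          exact Finset.sum_congr rfl fun m _ => by rw [key2 m]
      rw [h₁, h₂, Finset.mul_sum, ← Finset.sum_add_distrib]
      refine Finset.sum_congr rfl fun k hk => ?_
      simp only [Finset.mem_range] at hk
      have hkn : k ≤ n := Nat.lt_succ_iff.mp hk
      have hcast : ((n - k : ℕ) : ℚ) = (n : ℚ) - (k : ℚ) := by
        push_cast [hkn]; ring
      rw [hcast]
      ring
termination_by u.length + v.length

lemma ET_replicate_append (k : ℕ) (w : List Bool) (hw : w = [] ∨ ET w) :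
    ET (List.replicate k false ++ true :: w) := by
  induction k with
  | zero =>
    rcases hw with rfl | hw
    · exact ET.single
    · exact ET.cons true hw
  | succ k ih => exact ET.cons false ih

lemma wordOf_cons (a : ℕ) (as : List ℕ) :
    wordOf (a :: as) = List.replicate (a - 1) false ++ true :: wordOf as := by
  simp [wordOf]

lemma ET_wordOf (a : ℕ) (as : List ℕ) : ET (wordOf (a :: as)) := by
  induction as generalizing a with
  | nil => rw [wordOf_cons]; exact ET_replicate_append _ _ (Or.inl rfl)
  | cons b bs ih => rw [wordOf_cons]; exact ET_replicate_append _ _ (Or.inr (ih b))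

lemma wordToIndex_replicate (k : ℕ) (w : List Bool) :
    wordToIndex (List.replicate k false ++ true :: w) = (k + 1) :: wordToIndex w := by
  induction k with
  | zero => simp [wordToIndex]
  | succ k ih => simpa [wordToIndex, List.replicate_succ] using by rw [ih]

lemma wordToIndex_wordOf (a : List ℕ) (h : ∀ x ∈ a, 1 ≤ x) :
    wordToIndex (wordOf a) = a := by
  induction a with
  | nil => rfl
  | cons b bs ih =>
    rw [wordOf_cons, wordToIndex_replicate, ih fun x hx => h x (List.mem_cons_of_mem b hx)]
    have hb : 1 ≤ b := h b (List.mem_cons_self)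
    congr 1
    omega

lemma wordToIndex_ne_nil {w : List Bool} (h : ET w) : wordToIndex w ≠ [] := by
  induction h with
  | single => simp [wordToIndex]
  | @cons x w hw ih =>
    cases x
    · obtain ⟨b, bs, hbs⟩ := List.exists_cons_of_ne_nil ih
      simp [wordToIndex, hbs]
    · simp [wordToIndex]

lemma sum_range_eq_sum_Icc {g : ℕ → ℚ} (hg : g 0 = 0) (n : ℕ) :
    ∑ m ∈ Finset.range n, g m = ∑ m ∈ Finset.Icc 1 (n - 1), g m := by
  cases n with
  | zero => simp
  | succ n =>
    simp only [Nat.succ_sub_one]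
    induction n with
    | zero => simpa using hg
    | succ n ih =>
      rw [Finset.sum_range_succ, ih, Finset.sum_Icc_succ_top (by omega : 1 ≤ n + 1)]

lemma wordToIndex_pos {w : List Bool} (h : ET w) : ∀ x ∈ wordToIndex w, 1 ≤ x := by
  induction h with
  | single => intro x hx; simp [wordToIndex] at hx; omega
  | @cons b w hw ih =>
    cases b
    · obtain ⟨c, cs, hcs⟩ := List.exists_cons_of_ne_nil (wordToIndex_ne_nil hw)
      intro x hx
      simp only [wordToIndex, hcs] at hx
      rcases List.mem_cons.mp hx with rfl | hx
      · omega
      · exact ih x (by rw [hcs]; exact List.mem_cons_of_mem c hx)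
    · intro x hx
      simp only [wordToIndex] at hx
      rcases List.mem_cons.mp hx with rfl | hx
      · omega
      · exact ih x hx

lemma c_spec {w : List Bool} (h : ET w) :
    ∀ (a : ℕ) (as : List ℕ), wordToIndex w = a :: as →
      ∀ n : ℕ, c w n = zetaN (n - 1) as / (n : ℚ) ^ a := by
  induction h with
  | single =>
    intro a as hw n
    obtain ⟨rfl, rfl⟩ : 1 = a ∧ [] = as := by simpa [wordToIndex] using hw
    have hsum : ∑ m ∈ Finset.range n, c [] m = if 0 < n then 1 else 0 := by
      cases n with
      | zero => simp
      | succ n =>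
        have he : ∀ m ∈ Finset.range (n + 1), c [] m =
            if m = 0 then (1 : ℚ) else 0 := fun m _ => rfl
        rw [Finset.sum_congr rfl he,
          Finset.sum_ite_eq' (Finset.range (n + 1)) 0 fun _ => (1 : ℚ)]
        simp
    rw [show c [true] n = (∑ m ∈ Finset.range n, c [] m) / n from rfl, hsum]
    cases n with
    | zero => simp
    | succ n => simp [zetaN]
  | @cons x w hw ih =>
    intro a as hidx n
    obtain ⟨b, bs, hbs⟩ := List.exists_cons_of_ne_nil (wordToIndex_ne_nil hw)
    cases x
    · simp only [wordToIndex, hbs] at hidx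
      obtain ⟨rfl, rfl⟩ : b + 1 = a ∧ bs = as := by simpa using hidx
      simp only [c, ih b bs hbs n]
      rw [div_div, ← pow_succ]
    · simp only [wordToIndex, hbs] at hidx
      obtain ⟨rfl, rfl⟩ : 1 = a ∧ b :: bs = as := by simpa using hidx
      simp only [c, pow_one]
      congr 1
      have h0 : c w 0 = 0 := c_zero hw.ne_nil
      rw [Finset.sum_congr rfl fun m _ => ih b bs hbs m]
      rw [show zetaN (n - 1) (b :: bs) =
        ∑ m ∈ Finset.Icc 1 (n - 1), zetaN (m - 1) bs / (m : ℚ) ^ b from rfl]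
      rw [sum_range_eq_sum_Icc]
      have hb1 : 1 ≤ b := by
        have := wordToIndex_pos hw b (by rw [hbs]; exact List.mem_cons_self)
        exact this
      simp [zero_pow (by omega : b ≠ 0)]

lemma zetaN_c_sum {w : List Bool} (h : ET w) (N : ℕ) :
    zetaN N (wordToIndex w) = ∑ n ∈ Finset.range (N + 1), c w n := by
  obtain ⟨a, as, has⟩ := List.exists_cons_of_ne_nil (wordToIndex_ne_nil h)
  rw [has]
  rw [sum_range_eq_sum_Icc (c_zero h.ne_nil), Nat.add_sub_cancel]
  rw [show zetaN N (a :: as) = ∑ n ∈ Finset.Icc 1 N, zetaN (n - 1) as / (n : ℚ) ^ a from rfl]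
  exact Finset.sum_congr rfl fun n _ => (c_spec h a as has n).symm

lemma zetaN_nonneg (as : List ℕ) (N : ℕ) : 0 ≤ zetaN N as := by
  induction as generalizing N with
  | nil => norm_num [zetaN]
  | cons a as ih =>
    rw [show zetaN N (a :: as) = ∑ n ∈ Finset.Icc 1 N, zetaN (n - 1) as / (n : ℚ) ^ a from rfl]
    exact Finset.sum_nonneg fun n _ => div_nonneg (ih _) (by positivity)

lemma sum_one_div_sqrt_le (N : ℕ) :
    ∑ n ∈ Finset.Icc 1 N, (1 / Real.sqrt n) ≤ 2 * Real.sqrt N := by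
  induction N with
  | zero => simp
  | succ N ih =>
    rw [Finset.sum_Icc_succ_top (by omega : 1 ≤ N + 1)]
    have hb : (0 : ℝ) < Real.sqrt ((N : ℝ) + 1) := Real.sqrt_pos.mpr (by positivity)
    have ha : (0 : ℝ) ≤ Real.sqrt N := Real.sqrt_nonneg N
    have ha2 : Real.sqrt N ^ 2 = (N : ℝ) := Real.sq_sqrt (by positivity)
    have hb2 : Real.sqrt ((N : ℝ) + 1) ^ 2 = (N : ℝ) + 1 := Real.sq_sqrt (by positivity)
    push_cast
    have h1 : 1 / Real.sqrt ((N : ℝ) + 1) ≤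
        2 * Real.sqrt ((N : ℝ) + 1) - 2 * Real.sqrt N := by
      rw [div_le_iff₀ hb]
      nlinarith [sq_nonneg (Real.sqrt ((N : ℝ) + 1) - Real.sqrt N)]
    linarith

lemma sum_sqrt_div_sq_le (N : ℕ) :
    ∑ n ∈ Finset.Icc 1 N, (Real.sqrt n / (n : ℝ) ^ 2) ≤ 3 := by
  rcases Nat.eq_zero_or_pos N with rfl | hN
  · simp
  have main : ∀ M : ℕ, 1 ≤ M →
      ∑ n ∈ Finset.Icc 1 M, (Real.sqrt n / (n : ℝ) ^ 2) ≤ 3 - 2 / Real.sqrt M := by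
    intro M hM
    induction M, hM using Nat.le_induction with
    | base => norm_num [Real.sqrt_one]
    | succ M hM ih =>
      rw [Finset.sum_Icc_succ_top (by omega : 1 ≤ M + 1)]
      set a := Real.sqrt M with hadef
      set b := Real.sqrt ((M : ℝ) + 1) with hbdef
      have haM : (1 : ℝ) ≤ (M : ℝ) := by exact_mod_cast hM
      have ha : (1 : ℝ) ≤ a := by
        rw [hadef, show (1 : ℝ) = Real.sqrt 1 from Real.sqrt_one.symm]
        exact Real.sqrt_le_sqrt haM
      have ha0 : (0 : ℝ) < a := by linarith
      have hb0 : (0 : ℝ) < b := Real.sqrt_pos.mpr (by positivity)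
      have ha2 : a ^ 2 = (M : ℝ) := Real.sq_sqrt (by positivity)
      have hb2 : b ^ 2 = (M : ℝ) + 1 := Real.sq_sqrt (by positivity)
      have hab : a ≤ b := Real.sqrt_le_sqrt (by linarith)
      have hd : (b - a) * (b + a) = 1 := by nlinarith
      have hcast : ((M : ℕ) + 1 : ℕ) = ((M : ℝ) + 1 : ℝ) := by push_cast; ring
      have hsq : Real.sqrt (((M + 1 : ℕ)) : ℝ) = b := by rw [hbdef]; norm_num
      have hstep : Real.sqrt (((M + 1 : ℕ)) : ℝ) / (((M + 1 : ℕ) : ℝ)) ^ 2 ≤ 2 / a - 2 / b := by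
        rw [hsq, show (((M + 1 : ℕ)) : ℝ) = b ^ 2 by rw [hb2]; push_cast; ring]
        have h7 : a * (a + b) ≤ 2 * b ^ 2 := by nlinarith
        have h9 : (0 : ℝ) ≤ 2 * b ^ 2 - a * (a + b) := by linarith
        have h10 : (2 * b ^ 3 - 2 * a * b ^ 2 - a) * (a + b) = 2 * b ^ 2 - a * (a + b) := by
          linear_combination (2 * b ^ 2) * hd
        have h11 : (0 : ℝ) ≤ 2 * b ^ 3 - 2 * a * b ^ 2 - a :=
          (mul_nonneg_iff_of_pos_right (by linarith : (0 : ℝ) < a + b)).mp (h10 ▸ h9)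
        rw [div_sub_div _ _ (ne_of_gt ha0) (ne_of_gt hb0), div_le_div_iff₀ (by positivity)
          (by positivity)]
        ring_nf
        nlinarith [h11, mul_pos ha0 hb0, pow_pos hb0 3]
      have hlast : 2 / b = 2 / Real.sqrt ((M + 1 : ℕ) : ℝ) := by rw [hsq]
      calc ∑ n ∈ Finset.Icc 1 M, (Real.sqrt n / (n : ℝ) ^ 2) +
            Real.sqrt ((M + 1 : ℕ) : ℝ) / (((M + 1 : ℕ)) : ℝ) ^ 2
          ≤ (3 - 2 / a) + (2 / a - 2 / b) := by
            have := ih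
            push_cast at hstep ⊢
            push_cast at this
            linarith
        _ = 3 - 2 / b := by ring
        _ = 3 - 2 / Real.sqrt ((M + 1 : ℕ) : ℝ) := by rw [hlast]
  have h2 := main N hN
  have : (0 : ℝ) ≤ 2 / Real.sqrt N := by positivity
  linarith

lemma zetaN_le_sqrt (as : List ℕ) (h : ∀ x ∈ as, 1 ≤ x) (N : ℕ) :
    ((zetaN N as : ℚ) : ℝ) ≤ 2 ^ as.length * Real.sqrt ((N : ℝ) + 1) := by
  induction as generalizing N with
  | nil =>
    have : (1 : ℝ) ≤ Real.sqrt ((N : ℝ) + 1) := by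
      have h0 : (0 : ℝ) ≤ (N : ℝ) := Nat.cast_nonneg N
      have h1 := Real.sqrt_le_sqrt (show (1 : ℝ) ≤ (N : ℝ) + 1 by linarith)
      simpa using h1
    simpa [zetaN] using this
  | cons a as ih =>
    have hL : ∀ n ∈ Finset.Icc 1 N, ((zetaN (n - 1) as / (n : ℚ) ^ a : ℚ) : ℝ) ≤
        2 ^ as.length * (1 / Real.sqrt n) := by
      intro n hn
      simp only [Finset.mem_Icc] at hn
      have hn1 : 1 ≤ n := hn.1
      have hn1' : (1 : ℝ) ≤ (n : ℝ) := by exact_mod_cast hn1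
      have hnpos : (0 : ℝ) < (n : ℝ) := by linarith
      have hcast : ((n - 1 : ℕ) : ℝ) + 1 = (n : ℝ) := by
        have : (n - 1 : ℕ) + 1 = n := by omega
        exact_mod_cast congrArg (Nat.cast : ℕ → ℝ) this
      have h1 : ((zetaN (n - 1) as : ℚ) : ℝ) ≤ 2 ^ as.length * Real.sqrt n := by
        have := ih (fun x hx => h x (List.mem_cons_of_mem a hx)) (n - 1)
        rwa [hcast] at this
      have ha1 : 1 ≤ a := h a (List.mem_cons_self)
      have hpow : (n : ℝ) ≤ (n : ℝ) ^ a := le_self_pow₀ hn1' (by omega)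
      have hsq : (0 : ℝ) < Real.sqrt n := Real.sqrt_pos.mpr hnpos
      have hzn : (0 : ℝ) ≤ ((zetaN (n - 1) as : ℚ) : ℝ) := by
        exact_mod_cast zetaN_nonneg as (n - 1)
      have hc : ((zetaN (n - 1) as / (n : ℚ) ^ a : ℚ) : ℝ) =
          ((zetaN (n - 1) as : ℚ) : ℝ) / (n : ℝ) ^ a := by push_cast; ring
      rw [hc]
      have step1 : ((zetaN (n - 1) as : ℚ) : ℝ) / (n : ℝ) ^ a ≤
          (2 ^ as.length * Real.sqrt n) / (n : ℝ) ^ a := by gcongr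
      have h2 : Real.sqrt n / (n : ℝ) ^ a ≤ 1 / Real.sqrt n := by
        rw [div_le_div_iff₀ (by positivity) hsq]
        calc Real.sqrt n * Real.sqrt n = (n : ℝ) := Real.mul_self_sqrt (by positivity)
          _ ≤ (n : ℝ) ^ a := hpow
          _ = 1 * (n : ℝ) ^ a := (one_mul _).symm
      have step2 : (2 ^ as.length * Real.sqrt n) / (n : ℝ) ^ a ≤
          2 ^ as.length * (1 / Real.sqrt n) := by
        rw [mul_div_assoc]
        exact mul_le_mul_of_nonneg_left h2 (by positivity)
      exact step1.trans step2
    have hz : ((zetaN N (a :: as) : ℚ) : ℝ) =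
        ∑ n ∈ Finset.Icc 1 N, ((zetaN (n - 1) as / (n : ℚ) ^ a : ℚ) : ℝ) := by
      rw [show zetaN N (a :: as) = ∑ n ∈ Finset.Icc 1 N, zetaN (n - 1) as / (n : ℚ) ^ a from rfl,
        Rat.cast_sum]
    rw [hz]
    calc ∑ n ∈ Finset.Icc 1 N, ((zetaN (n - 1) as / (n : ℚ) ^ a : ℚ) : ℝ)
        ≤ ∑ n ∈ Finset.Icc 1 N, 2 ^ as.length * (1 / Real.sqrt n) := Finset.sum_le_sum hL
      _ = 2 ^ as.length * ∑ n ∈ Finset.Icc 1 N, (1 / Real.sqrt n) := by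
          rw [Finset.mul_sum]
      _ ≤ 2 ^ as.length * (2 * Real.sqrt N) := by
          have := sum_one_div_sqrt_le N
          gcongr
      _ ≤ 2 ^ as.length * (2 * Real.sqrt ((N : ℝ) + 1)) := by
          have : Real.sqrt N ≤ Real.sqrt ((N : ℝ) + 1) := Real.sqrt_le_sqrt (by linarith)
          gcongr
      _ = 2 ^ (a :: as).length * Real.sqrt ((N : ℝ) + 1) := by
          rw [List.length_cons, pow_succ]; ring

lemma zetaN_head_le (a : ℕ) (as : List ℕ) (h : ∀ x ∈ as, 1 ≤ x) (ha : 2 ≤ a) (N : ℕ) :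
    ((zetaN N (a :: as) : ℚ) : ℝ) ≤ 3 * 2 ^ as.length := by
  have hL : ∀ n ∈ Finset.Icc 1 N, ((zetaN (n - 1) as / (n : ℚ) ^ a : ℚ) : ℝ) ≤
      2 ^ as.length * (Real.sqrt n / (n : ℝ) ^ 2) := by
    intro n hn
    simp only [Finset.mem_Icc] at hn
    have hn1 : 1 ≤ n := hn.1
    have hn1' : (1 : ℝ) ≤ (n : ℝ) := by exact_mod_cast hn1
    have hnpos : (0 : ℝ) < (n : ℝ) := by linarith
    have hcast : ((n - 1 : ℕ) : ℝ) + 1 = (n : ℝ) := by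
      have : (n - 1 : ℕ) + 1 = n := by omega
      exact_mod_cast congrArg (Nat.cast : ℕ → ℝ) this
    have h1 : ((zetaN (n - 1) as : ℚ) : ℝ) ≤ 2 ^ as.length * Real.sqrt n := by
      have := zetaN_le_sqrt as h (n - 1)
      rwa [hcast] at this
    have hpow : (n : ℝ) ^ 2 ≤ (n : ℝ) ^ a := pow_le_pow_right₀ hn1' ha
    have hzn : (0 : ℝ) ≤ ((zetaN (n - 1) as : ℚ) : ℝ) := by
      exact_mod_cast zetaN_nonneg as (n - 1)
    have hc : ((zetaN (n - 1) as / (n : ℚ) ^ a : ℚ) : ℝ) =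
        ((zetaN (n - 1) as : ℚ) : ℝ) / (n : ℝ) ^ a := by push_cast; ring
    rw [hc]
    calc ((zetaN (n - 1) as : ℚ) : ℝ) / (n : ℝ) ^ a
        ≤ (2 ^ as.length * Real.sqrt n) / (n : ℝ) ^ a := by gcongr
      _ ≤ (2 ^ as.length * Real.sqrt n) / (n : ℝ) ^ 2 := by
          gcongr
      _ = 2 ^ as.length * (Real.sqrt n / (n : ℝ) ^ 2) := by ring
  have hz : ((zetaN N (a :: as) : ℚ) : ℝ) =
      ∑ n ∈ Finset.Icc 1 N, ((zetaN (n - 1) as / (n : ℚ) ^ a : ℚ) : ℝ) := by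
    rw [show zetaN N (a :: as) = ∑ n ∈ Finset.Icc 1 N, zetaN (n - 1) as / (n : ℚ) ^ a from rfl,
      Rat.cast_sum]
  rw [hz]
  calc ∑ n ∈ Finset.Icc 1 N, ((zetaN (n - 1) as / (n : ℚ) ^ a : ℚ) : ℝ)
      ≤ ∑ n ∈ Finset.Icc 1 N, 2 ^ as.length * (Real.sqrt n / (n : ℝ) ^ 2) :=
        Finset.sum_le_sum hL
    _ = 2 ^ as.length * ∑ n ∈ Finset.Icc 1 N, (Real.sqrt n / (n : ℝ) ^ 2) := by
        rw [Finset.mul_sum]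
    _ ≤ 2 ^ as.length * 3 := by
        have := sum_sqrt_div_sq_le N
        gcongr
    _ = 3 * 2 ^ as.length := by ring

end MzvAux

open MzvAux in
/-- The shuffle identity for multiple zeta values: for admissible indices
(`a₁, b₁ ≥ 2`), `ζ(a) ζ(b) = ζ(a ⧢ b)`, with all limits existing;
`ζ` is extended linearly over the words of the shuffle product. -/
theorem mzv_shuffle (a₁ b₁ : ℕ) (as bs : List ℕ)
    (ha : ∀ x ∈ a₁ :: as, 1 ≤ x) (hb : ∀ x ∈ b₁ :: bs, 1 ≤ x)
    (ha₁ : 2 ≤ a₁) (hb₁ : 2 ≤ b₁) :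
    ∃ za zb zs : ℝ,
      Tendsto (fun N : ℕ => ((zetaN N (a₁ :: as) : ℚ) : ℝ)) atTop (𝓝 za) ∧
      Tendsto (fun N : ℕ => ((zetaN N (b₁ :: bs) : ℚ) : ℝ)) atTop (𝓝 zb) ∧
      Tendsto (fun N : ℕ =>
          ((((shuffle (wordOf (a₁ :: as)) (wordOf (b₁ :: bs))).map
              (fun w => zetaN N (wordToIndex w))).sum : ℚ) : ℝ)) atTop (𝓝 zs) ∧
      za * zb = zs := by
  have hETu : ET (wordOf (a₁ :: as)) := ET_wordOf a₁ as
  have hETv : ET (wordOf (b₁ :: bs)) := ET_wordOf b₁ bs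
  set u := wordOf (a₁ :: as) with hu
  set v := wordOf (b₁ :: bs) with hv
  have hui : wordToIndex u = a₁ :: as := wordToIndex_wordOf _ ha
  have hvi : wordToIndex v = b₁ :: bs := wordToIndex_wordOf _ hb
  set f : ℕ → ℝ := fun n => ((c u n : ℚ) : ℝ) with hf
  set g : ℕ → ℝ := fun n => ((c v n : ℚ) : ℝ) with hg
  have hf0 : ∀ n, 0 ≤ f n := fun n => by
    show (0 : ℝ) ≤ ((c u n : ℚ) : ℝ)
    exact_mod_cast c_nonneg u n
  have hg0 : ∀ n, 0 ≤ g n := fun n => by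
    show (0 : ℝ) ≤ ((c v n : ℚ) : ℝ)
    exact_mod_cast c_nonneg v n
  have hpu : ∀ N, ∑ n ∈ Finset.range (N + 1), f n = ((zetaN N (a₁ :: as) : ℚ) : ℝ) := by
    intro N
    rw [← hui, zetaN_c_sum hETu N, Rat.cast_sum]
  have hpv : ∀ N, ∑ n ∈ Finset.range (N + 1), g n = ((zetaN N (b₁ :: bs) : ℚ) : ℝ) := by
    intro N
    rw [← hvi, zetaN_c_sum hETv N, Rat.cast_sum]
  have hfs : Summable f := by
    apply summable_of_sum_range_le (c := 3 * 2 ^ as.length) hf0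
    intro N
    calc ∑ i ∈ Finset.range N, f i ≤ ∑ i ∈ Finset.range (N + 1), f i := by
          apply Finset.sum_le_sum_of_subset_of_nonneg (Finset.range_subset_range.mpr (by omega))
          intro i _ _; exact hf0 i
      _ = ((zetaN N (a₁ :: as) : ℚ) : ℝ) := hpu N
      _ ≤ 3 * 2 ^ as.length :=
          zetaN_head_le a₁ as (fun x hx => ha x (List.mem_cons_of_mem _ hx)) ha₁ N
  have hgs : Summable g := by
    apply summable_of_sum_range_le (c := 3 * 2 ^ bs.length) hg0
    intro N
    calc ∑ i ∈ Finset.range N, g i ≤ ∑ i ∈ Finset.range (N + 1), g i := by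
          apply Finset.sum_le_sum_of_subset_of_nonneg (Finset.range_subset_range.mpr (by omega))
          intro i _ _; exact hg0 i
      _ = ((zetaN N (b₁ :: bs) : ℚ) : ℝ) := hpv N
      _ ≤ 3 * 2 ^ bs.length :=
          zetaN_head_le b₁ bs (fun x hx => hb x (List.mem_cons_of_mem _ hx)) hb₁ N
  have hA : Tendsto (fun N : ℕ => ((zetaN N (a₁ :: as) : ℚ) : ℝ)) atTop (𝓝 (∑' n, f n)) := by
    have h2 := hfs.hasSum.tendsto_sum_nat.comp (tendsto_add_atTop_nat 1)
    exact Tendsto.congr (fun N => by simpa using hpu N) h2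
  have hB : Tendsto (fun N : ℕ => ((zetaN N (b₁ :: bs) : ℚ) : ℝ)) atTop (𝓝 (∑' n, g n)) := by
    have h2 := hgs.hasSum.tendsto_sum_nat.comp (tendsto_add_atTop_nat 1)
    exact Tendsto.congr (fun N => by simpa using hpv N) h2
  have hfn : Summable (fun n => ‖f n‖) :=
    hfs.congr fun n => (Real.norm_of_nonneg (hf0 n)).symm
  have hgn : Summable (fun n => ‖g n‖) :=
    hgs.congr fun n => (Real.norm_of_nonneg (hg0 n)).symm
  have hhs : Summable (fun n => ∑ k ∈ Finset.range (n + 1), f k * g (n - k)) :=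
    (summable_norm_sum_mul_range_of_summable_norm hfn hgn).of_norm
  have hprod : (∑' n, f n) * (∑' n, g n) =
      ∑' n, ∑ k ∈ Finset.range (n + 1), f k * g (n - k) :=
    Summable.tsum_mul_tsum_eq_tsum_sum_range hfs hgs (summable_mul_of_summable_norm hfn hgn)
  have hq : ∀ N : ℕ, ((shuffle u v).map (fun w => zetaN N (wordToIndex w))).sum =
      ∑ n ∈ Finset.range (N + 1), ∑ k ∈ Finset.range (n + 1), c u k * c v (n - k) := by
    intro N
    have hmap : (shuffle u v).map (fun w => zetaN N (wordToIndex w)) =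
        (shuffle u v).map (fun w => ∑ n ∈ Finset.range (N + 1), c w n) :=
      Multiset.map_congr rfl fun w hw =>
        zetaN_c_sum (ET.shuffle (Or.inr hETu) (Or.inr hETv)
          (fun hc => hETu.ne_nil hc.1) w hw) N
    rw [hmap, multiset_sum_comm]
    exact Finset.sum_congr rfl fun n _ => key u v (Or.inr hETu) (Or.inr hETv) n
  refine ⟨∑' n, f n, ∑' n, g n, ∑' n, ∑ k ∈ Finset.range (n + 1), f k * g (n - k),
    hA, hB, ?_, hprod.symm ▸ rfl⟩
  have h2 := hhs.hasSum.tendsto_sum_nat.comp (tendsto_add_atTop_nat 1)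
  refine Tendsto.congr (fun N => ?_) h2
  show ∑ n ∈ Finset.range (N + 1), ∑ k ∈ Finset.range (n + 1), f k * g (n - k) = _
  rw [hq N]
  rw [Rat.cast_sum]
  refine Finset.sum_congr rfl fun n _ => ?_
  rw [Rat.cast_sum]
  refine Finset.sum_congr rfl fun k _ => ?_
  rw [hf, hg]
  push_cast
  ring
end

section
/- Euler's decomposition formula as a limit: for integers a, b ≥ 2, ζ(a) ζ(b) = Σ_{i=1}^{a} C(i+b-2, b-1) ζ(i+b-1, a+1-i) + Σ_{i=1}^{b} C(i+a-2, a-1) ζ(i+a-1, b+1-i). -/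
open Finset
open scoped ENNReal

/-- The Riemann zeta value `ζ(s) = Σ_{n ≥ 1} 1/n^s`. -/
noncomputable def rzeta (s : ℕ) : ℝ := ∑' n : ℕ, 1 / ((n : ℝ) + 1) ^ s

/-- The double zeta value `ζ(s,t) = Σ_{n > m ≥ 1} 1/(n^s m^t)`. -/
noncomputable def rzeta2 (s t : ℕ) : ℝ :=
  ∑' p : {q : ℕ × ℕ // 0 < q.2 ∧ q.2 < q.1}, 1 / (((p : ℕ × ℕ).1 : ℝ) ^ s * ((p : ℕ × ℕ).2 : ℝ) ^ t)

lemma pf_base (b : ℕ) (x y : ℝ) (hx : 0 < x) (hy : 0 < y) :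
    1 / (x * y ^ (b+1)) =
      1 / ((x+y)^(b+1) * x) + ∑ k ∈ range (b+1), 1 / ((x+y)^(b+1-k) * y^(k+1)) := by
  induction b with
  | zero =>
    have hs : 0 < x + y := by linarith
    simp only [zero_add, pow_one, range_one, sum_singleton, Nat.sub_self, pow_zero]
    norm_num
    field_simp
    ring
  | succ b ih =>
    have hs : 0 < x + y := by linarith
    have key : 1 / (x * y ^ (b+2)) = (1/(x+y)) * (1 / (x * y ^ (b+1))) + 1 / ((x+y) * y^(b+2)) := by
      field_simp
      ring
    have h1 : (1:ℝ)/(x+y) * (1 / ((x+y)^(b+1) * x)) = 1 / ((x+y)^(b+2) * x) := by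
      rw [div_mul_div_comm, one_mul, ← mul_assoc, ← pow_succ']
    have h2 : (1:ℝ)/(x+y) * ∑ k ∈ range (b+1), 1 / ((x+y)^(b+1-k) * y^(k+1))
        = ∑ k ∈ range (b+1), 1 / ((x+y)^(b+2-k) * y^(k+1)) := by
      rw [mul_sum]
      refine sum_congr rfl fun k hk => ?_
      have hk' : k ≤ b := by simpa [Nat.lt_succ_iff] using hk
      have he : b + 2 - k = (b + 1 - k) + 1 := by omega
      rw [he, div_mul_div_comm, one_mul, ← mul_assoc, ← pow_succ']
    rw [key, ih, mul_add, h1, h2, sum_range_succ _ (b+1)]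
    have h3 : b + 1 + 1 - (b+1) = 1 := by omega
    rw [h3, pow_one]
    ring

lemma mul_one_div_step (s t c : ℝ) (m : ℕ) : 1/s * (c/(s^m * t)) = c/(s^(m+1)*t) := by
  rw [div_mul_div_comm, one_mul, pow_succ', mul_assoc]

lemma pf (a b : ℕ) (x y : ℝ) (hx : 0 < x) (hy : 0 < y) :
    1 / (x^(a+1) * y^(b+1)) =
      (∑ k ∈ range (a+1), (Nat.choose (a+b-k) b : ℝ) / ((x+y)^(a+b+1-k) * x^(k+1)))
    + (∑ k ∈ range (b+1), (Nat.choose (a+b-k) a : ℝ) / ((x+y)^(a+b+1-k) * y^(k+1))) := by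
  induction a generalizing b with
  | zero =>
    simp only [zero_add, range_one, sum_singleton, Nat.sub_zero, Nat.choose_self,
      Nat.choose_zero_right, pow_one, Nat.cast_one]
    exact pf_base b x y hx hy
  | succ a ih =>
    induction b with
    | zero =>
      simp only [zero_add, Nat.add_zero, range_one, sum_singleton, Nat.sub_zero,
        Nat.choose_self, Nat.choose_zero_right, pow_one, Nat.cast_one]
      have := pf_base (a+1) y x hy hx
      rw [add_comm y x] at this
      rw [show y * x ^ (a+1+1) = x ^ (a+1+1) * y by ring] at this
      rw [this]
      ring_nf
    | succ b ihb =>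
      have ha := ih (b+1)
      have key : 1 / (x^(a+2) * y^(b+2)) =
          (1/(x+y)) * (1/(x^(a+1) * y^(b+2)) + 1/(x^(a+2) * y^(b+1))) := by
        have hs : 0 < x + y := by linarith
        field_simp
        ring
      have Hx1 : (1/(x+y)) * ∑ k ∈ range (a+1),
            (Nat.choose (a+(b+1)-k) (b+1) : ℝ)/((x+y)^(a+(b+1)+1-k) * x^(k+1))
          = ∑ k ∈ range (a+2), (Nat.choose (a+b+1-k) (b+1) : ℝ)/((x+y)^(a+b+3-k) * x^(k+1)) := by
        rw [sum_range_succ _ (a+1), show a+b+1-(a+1) = b by omega,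
          Nat.choose_eq_zero_of_lt (Nat.lt_succ_self b)]
        simp only [Nat.cast_zero, zero_div, add_zero, mul_sum]
        refine sum_congr rfl fun k hk => ?_
        have hk' : k ≤ a := by simpa [Nat.lt_succ_iff] using hk
        rw [show a+(b+1)-k = a+b+1-k by omega, show a+(b+1)+1-k = a+b+2-k by omega,
          mul_one_div_step, show a+b+2-k+1 = a+b+3-k by omega]
      have Hx2 : (1/(x+y)) * ∑ k ∈ range (a+2),
            (Nat.choose (a+1+b-k) b : ℝ)/((x+y)^(a+1+b+1-k) * x^(k+1))
          = ∑ k ∈ range (a+2), (Nat.choose (a+b+1-k) b : ℝ)/((x+y)^(a+b+3-k) * x^(k+1)) := by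
        rw [mul_sum]
        refine sum_congr rfl fun k hk => ?_
        have hk' : k ≤ a+1 := by simpa [Nat.lt_succ_iff] using hk
        rw [show a+1+b-k = a+b+1-k by omega, show a+1+b+1-k = a+b+2-k by omega,
          mul_one_div_step, show a+b+2-k+1 = a+b+3-k by omega]
      have Hy1 : (1/(x+y)) * ∑ k ∈ range (b+2),
            (Nat.choose (a+(b+1)-k) a : ℝ)/((x+y)^(a+(b+1)+1-k) * y^(k+1))
          = ∑ k ∈ range (b+2), (Nat.choose (a+b+1-k) a : ℝ)/((x+y)^(a+b+3-k) * y^(k+1)) := by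
        rw [mul_sum]
        refine sum_congr rfl fun k hk => ?_
        have hk' : k ≤ b+1 := by simpa [Nat.lt_succ_iff] using hk
        rw [show a+(b+1)-k = a+b+1-k by omega, show a+(b+1)+1-k = a+b+2-k by omega,
          mul_one_div_step, show a+b+2-k+1 = a+b+3-k by omega]
      have Hy2 : (1/(x+y)) * ∑ k ∈ range (b+1),
            (Nat.choose (a+1+b-k) (a+1) : ℝ)/((x+y)^(a+1+b+1-k) * y^(k+1))
          = ∑ k ∈ range (b+2), (Nat.choose (a+b+1-k) (a+1) : ℝ)/((x+y)^(a+b+3-k) * y^(k+1)) := by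
        rw [sum_range_succ _ (b+1), show a+b+1-(b+1) = a by omega,
          Nat.choose_eq_zero_of_lt (Nat.lt_succ_self a)]
        simp only [Nat.cast_zero, zero_div, add_zero, mul_sum]
        refine sum_congr rfl fun k hk => ?_
        have hk' : k ≤ b := by simpa [Nat.lt_succ_iff] using hk
        rw [show a+1+b-k = a+b+1-k by omega, show a+1+b+1-k = a+b+2-k by omega,
          mul_one_div_step, show a+b+2-k+1 = a+b+3-k by omega]
      have combx : ∀ k ∈ range (a+2),
          (Nat.choose (a+b+1-k) (b+1) : ℝ)/((x+y)^(a+b+3-k) * x^(k+1))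
          + (Nat.choose (a+b+1-k) b : ℝ)/((x+y)^(a+b+3-k) * x^(k+1))
          = (Nat.choose (a+1+(b+1)-k) (b+1) : ℝ)/((x+y)^(a+1+(b+1)+1-k) * x^(k+1)) := by
        intro k hk
        have hk' : k ≤ a+1 := by simpa [Nat.lt_succ_iff] using hk
        rw [← add_div, show a+1+(b+1)-k = (a+b+1-k)+1 by omega,
          show a+1+(b+1)+1-k = a+b+3-k by omega, Nat.choose_succ_succ, Nat.cast_add, add_comm]
      have comby : ∀ k ∈ range (b+2),
          (Nat.choose (a+b+1-k) a : ℝ)/((x+y)^(a+b+3-k) * y^(k+1))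
          + (Nat.choose (a+b+1-k) (a+1) : ℝ)/((x+y)^(a+b+3-k) * y^(k+1))
          = (Nat.choose (a+1+(b+1)-k) (a+1) : ℝ)/((x+y)^(a+1+(b+1)+1-k) * y^(k+1)) := by
        intro k hk
        have hk' : k ≤ b+1 := by simpa [Nat.lt_succ_iff] using hk
        rw [← add_div, show a+1+(b+1)-k = (a+b+1-k)+1 by omega,
          show a+1+(b+1)+1-k = a+b+3-k by omega, Nat.choose_succ_succ, Nat.cast_add]
      calc 1 / (x^(a+1+1) * y^(b+1+1))
          = (1/(x+y)) * (1/(x^(a+1) * y^(b+2)) + 1/(x^(a+2) * y^(b+1))) := key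
        _ = ((1/(x+y)) * ∑ k ∈ range (a+1),
              (Nat.choose (a+(b+1)-k) (b+1) : ℝ)/((x+y)^(a+(b+1)+1-k) * x^(k+1))
            + (1/(x+y)) * ∑ k ∈ range (b+2),
              (Nat.choose (a+(b+1)-k) a : ℝ)/((x+y)^(a+(b+1)+1-k) * y^(k+1)))
            + ((1/(x+y)) * ∑ k ∈ range (a+2),
              (Nat.choose (a+1+b-k) b : ℝ)/((x+y)^(a+1+b+1-k) * x^(k+1))
            + (1/(x+y)) * ∑ k ∈ range (b+1),
              (Nat.choose (a+1+b-k) (a+1) : ℝ)/((x+y)^(a+1+b+1-k) * y^(k+1))) := by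
            rw [ha, ihb]; ring
        _ = (∑ k ∈ range (a+2), (Nat.choose (a+b+1-k) (b+1) : ℝ)/((x+y)^(a+b+3-k) * x^(k+1))
            + ∑ k ∈ range (a+2), (Nat.choose (a+b+1-k) b : ℝ)/((x+y)^(a+b+3-k) * x^(k+1)))
            + (∑ k ∈ range (b+2), (Nat.choose (a+b+1-k) a : ℝ)/((x+y)^(a+b+3-k) * y^(k+1))
            + ∑ k ∈ range (b+2), (Nat.choose (a+b+1-k) (a+1) : ℝ)/((x+y)^(a+b+3-k) * y^(k+1))) := by
            rw [Hx1, Hx2, Hy1, Hy2]; ring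
        _ = (∑ k ∈ range (a+1+1),
              (Nat.choose (a+1+(b+1)-k) (b+1) : ℝ)/((x+y)^(a+1+(b+1)+1-k) * x^(k+1)))
            + (∑ k ∈ range (b+1+1),
              (Nat.choose (a+1+(b+1)-k) (a+1) : ℝ)/((x+y)^(a+1+(b+1)+1-k) * y^(k+1))) := by
            rw [← sum_add_distrib, ← sum_add_distrib]
            exact congrArg₂ (· + ·) (sum_congr rfl combx) (sum_congr rfl comby)

/-- ENNReal version of the single zeta value. -/
noncomputable def ez (s : ℕ) : ℝ≥0∞ := ∑' n : ℕ, ENNReal.ofReal (1 / ((n : ℝ) + 1) ^ s)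

/-- ENNReal version of the double zeta value. -/
noncomputable def ez2 (s t : ℕ) : ℝ≥0∞ :=
  ∑' p : {q : ℕ × ℕ // 0 < q.2 ∧ q.2 < q.1},
    ENNReal.ofReal (1 / (((p : ℕ × ℕ).1 : ℝ) ^ s * ((p : ℕ × ℕ).2 : ℝ) ^ t))

lemma rzeta_eq (s : ℕ) : rzeta s = (ez s).toReal := by
  rw [rzeta, ez, ENNReal.tsum_toReal_eq (fun n => ENNReal.ofReal_ne_top)]
  exact tsum_congr fun n => (ENNReal.toReal_ofReal (by positivity)).symm

lemma rzeta2_eq (s t : ℕ) : rzeta2 s t = (ez2 s t).toReal := by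
  rw [rzeta2, ez2, ENNReal.tsum_toReal_eq (fun n => ENNReal.ofReal_ne_top)]
  exact tsum_congr fun p => (ENNReal.toReal_ofReal (by positivity)).symm

lemma ez_ne_top (s : ℕ) (hs : 2 ≤ s) : ez s ≠ ⊤ := by
  have hsum : Summable (fun n : ℕ => 1 / ((n : ℝ) + 1) ^ s) := by
    have h1 := (summable_nat_add_iff 1).mpr (Real.summable_one_div_nat_pow.mpr hs)
    refine h1.congr fun n => ?_
    push_cast
    ring
  rw [ez, ← ENNReal.ofReal_tsum_of_nonneg (fun n => by positivity) hsum]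
  exact ENNReal.ofReal_ne_top

/-- The pairing equivalence `(m, k) ↦ (m + k + 2, m + 1)`. -/
def pairEquiv : ℕ × ℕ ≃ {q : ℕ × ℕ // 0 < q.2 ∧ q.2 < q.1} where
  toFun p := ⟨(p.1 + p.2 + 2, p.1 + 1), by constructor <;> omega⟩
  invFun q := (q.1.2 - 1, q.1.1 - q.1.2 - 1)
  left_inv p := by
    obtain ⟨m, k⟩ := p
    exact Prod.ext_iff.mpr ⟨by dsimp only; omega, by dsimp only; omega⟩
  right_inv q := by
    obtain ⟨⟨n, m⟩, h1, h2⟩ := q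
    exact Subtype.ext (Prod.ext_iff.mpr ⟨by dsimp only; omega, by dsimp only; omega⟩)

/-- The flip equivalence `(n, m) ↦ (n, n - m)` on the domain. -/
def flipEquiv : {q : ℕ × ℕ // 0 < q.2 ∧ q.2 < q.1} ≃ {q : ℕ × ℕ // 0 < q.2 ∧ q.2 < q.1} where
  toFun q := ⟨(q.1.1, q.1.1 - q.1.2), by have h1 := q.2.1; have h2 := q.2.2; constructor <;> omega⟩
  invFun q := ⟨(q.1.1, q.1.1 - q.1.2), by have h1 := q.2.1; have h2 := q.2.2; constructor <;> omega⟩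
  left_inv q := by
    obtain ⟨⟨n, m⟩, h1, h2⟩ := q
    exact Subtype.ext (Prod.ext_iff.mpr ⟨rfl, by dsimp only; omega⟩)
  right_inv q := by
    obtain ⟨⟨n, m⟩, h1, h2⟩ := q
    exact Subtype.ext (Prod.ext_iff.mpr ⟨rfl, by dsimp only; omega⟩)

lemma ez2_flip (s t : ℕ) :
    ∑' q : {q : ℕ × ℕ // 0 < q.2 ∧ q.2 < q.1},
      ENNReal.ofReal (1 / (((q : ℕ × ℕ).1 : ℝ) ^ s * ((((q : ℕ × ℕ).1 - (q : ℕ × ℕ).2 : ℕ)) : ℝ) ^ t))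
    = ez2 s t := by
  rw [ez2, ← flipEquiv.tsum_eq]
  refine tsum_congr fun q => ?_
  obtain ⟨⟨n, m⟩, h1, h2⟩ := q
  show ENNReal.ofReal (1 / ((n : ℝ) ^ s * ((n - (n - m) : ℕ) : ℝ) ^ t)) = _
  rw [show n - (n - m) = m by omega]

lemma key_ennreal (A B : ℕ) :
    ez (A+1) * ez (B+1) =
      (∑ k ∈ range (A+1), (Nat.choose (A+B-k) B : ℝ≥0∞) * ez2 (A+B+1-k) (k+1))
    + (∑ k ∈ range (B+1), (Nat.choose (A+B-k) A : ℝ≥0∞) * ez2 (A+B+1-k) (k+1)) := by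
  have step1 : ez (A+1) * ez (B+1)
      = ∑' p : ℕ × ℕ, ENNReal.ofReal (1 / (((p.1 : ℝ) + 1) ^ (A+1) * ((p.2 : ℝ) + 1) ^ (B+1))) := by
    rw [ez, ez, ENNReal.tsum_prod', ← ENNReal.tsum_mul_right]
    refine tsum_congr fun m => ?_
    rw [← ENNReal.tsum_mul_left]
    refine tsum_congr fun k => ?_
    rw [← ENNReal.ofReal_mul (by positivity), div_mul_div_comm, one_mul]
  have step2 : ∑' p : ℕ × ℕ,
        ENNReal.ofReal (1 / (((p.1 : ℝ) + 1) ^ (A+1) * ((p.2 : ℝ) + 1) ^ (B+1)))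
      = ∑' q : {q : ℕ × ℕ // 0 < q.2 ∧ q.2 < q.1},
        ENNReal.ofReal (1 / (((q : ℕ × ℕ).2 : ℝ) ^ (A+1)
          * ((((q : ℕ × ℕ).1 - (q : ℕ × ℕ).2 : ℕ)) : ℝ) ^ (B+1))) := by
    rw [← pairEquiv.tsum_eq]
    refine tsum_congr fun p => ?_
    obtain ⟨m, k⟩ := p
    have h1 : ((pairEquiv (m, k) : ℕ × ℕ).2 : ℝ) = (m : ℝ) + 1 := by
      show ((m + 1 : ℕ) : ℝ) = (m : ℝ) + 1
      push_cast; ring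
    have h2 : (((pairEquiv (m, k) : ℕ × ℕ).1 - (pairEquiv (m, k) : ℕ × ℕ).2 : ℕ) : ℝ)
        = (k : ℝ) + 1 := by
      show ((m + k + 2 - (m + 1) : ℕ) : ℝ) = (k : ℝ) + 1
      rw [show m + k + 2 - (m + 1) = k + 1 by omega]
      push_cast; ring
    rw [h1, h2]
  rw [step1, step2]
  have step3 : ∀ q : {q : ℕ × ℕ // 0 < q.2 ∧ q.2 < q.1},
      ENNReal.ofReal (1 / (((q : ℕ × ℕ).2 : ℝ) ^ (A+1)
          * ((((q : ℕ × ℕ).1 - (q : ℕ × ℕ).2 : ℕ)) : ℝ) ^ (B+1)))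
      = (∑ k ∈ range (A+1), (Nat.choose (A+B-k) B : ℝ≥0∞)
          * ENNReal.ofReal (1 / (((q : ℕ × ℕ).1 : ℝ) ^ (A+B+1-k) * ((q : ℕ × ℕ).2 : ℝ) ^ (k+1))))
      + (∑ k ∈ range (B+1), (Nat.choose (A+B-k) A : ℝ≥0∞)
          * ENNReal.ofReal (1 / (((q : ℕ × ℕ).1 : ℝ) ^ (A+B+1-k)
              * ((((q : ℕ × ℕ).1 - (q : ℕ × ℕ).2 : ℕ)) : ℝ) ^ (k+1)))) := by
    intro q
    obtain ⟨⟨n, m⟩, hm, hmn⟩ := q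
    have hx : (0:ℝ) < (m : ℝ) := by exact_mod_cast hm
    have hy : (0:ℝ) < ((n - m : ℕ) : ℝ) := by
      have : 0 < n - m := by omega
      exact_mod_cast this
    have hsum : (m : ℝ) + ((n - m : ℕ) : ℝ) = (n : ℝ) := by
      have : m + (n - m) = n := by omega
      exact_mod_cast this
    have := pf A B (m : ℝ) ((n - m : ℕ) : ℝ) hx hy
    rw [hsum] at this
    simp only
    rw [this, ENNReal.ofReal_add (by positivity) (by positivity),
      ENNReal.ofReal_sum_of_nonneg (fun i _ => by positivity),
      ENNReal.ofReal_sum_of_nonneg (fun i _ => by positivity)]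
    congr 1
    · refine sum_congr rfl fun k hk => ?_
      rw [div_eq_mul_one_div, ENNReal.ofReal_mul (by positivity), ENNReal.ofReal_natCast]
    · refine sum_congr rfl fun k hk => ?_
      rw [div_eq_mul_one_div, ENNReal.ofReal_mul (by positivity), ENNReal.ofReal_natCast]
  rw [tsum_congr step3, Summable.tsum_add ENNReal.summable ENNReal.summable,
    Summable.tsum_finsetSum (fun i _ => ENNReal.summable), Summable.tsum_finsetSum (fun i _ => ENNReal.summable)]
  congr 1
  · refine sum_congr rfl fun k hk => ?_
    rw [ENNReal.tsum_mul_left, ez2]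
  · refine sum_congr rfl fun k hk => ?_
    rw [ENNReal.tsum_mul_left, ez2_flip]

/-- Euler's decomposition formula for `ζ(a)ζ(b)`. -/
theorem euler_decomposition (a b : ℕ) (ha : 2 ≤ a) (hb : 2 ≤ b) :
    rzeta a * rzeta b =
      (∑ i ∈ Finset.Icc 1 a,
        (Nat.choose (i + b - 2) (b - 1) : ℝ) * rzeta2 (i + b - 1) (a + 1 - i))
      + ∑ i ∈ Finset.Icc 1 b,
        (Nat.choose (i + a - 2) (a - 1) : ℝ) * rzeta2 (i + a - 1) (b + 1 - i) := by
  obtain ⟨A, rfl⟩ : ∃ A, a = A + 1 := ⟨a - 1, by omega⟩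
  obtain ⟨B, rfl⟩ : ∃ B, b = B + 1 := ⟨b - 1, by omega⟩
  have hkey := key_ennreal A B
  have hAtop : ez (A+1) ≠ ⊤ := ez_ne_top _ ha
  have hBtop : ez (B+1) ≠ ⊤ := ez_ne_top _ hb
  have hprod : ez (A+1) * ez (B+1) ≠ ⊤ := ENNReal.mul_ne_top hAtop hBtop
  have hRHS : ((∑ k ∈ range (A+1), (Nat.choose (A+B-k) B : ℝ≥0∞) * ez2 (A+B+1-k) (k+1))
      + (∑ k ∈ range (B+1), (Nat.choose (A+B-k) A : ℝ≥0∞) * ez2 (A+B+1-k) (k+1))) ≠ ⊤ := by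
    rw [← hkey]; exact hprod
  have hS1 : (∑ k ∈ range (A+1), (Nat.choose (A+B-k) B : ℝ≥0∞) * ez2 (A+B+1-k) (k+1)) ≠ ⊤ :=
    (ENNReal.add_ne_top.mp hRHS).1
  have hS2 : (∑ k ∈ range (B+1), (Nat.choose (A+B-k) A : ℝ≥0∞) * ez2 (A+B+1-k) (k+1)) ≠ ⊤ :=
    (ENNReal.add_ne_top.mp hRHS).2
  have ht1 : ∀ k ∈ range (A+1), (Nat.choose (A+B-k) B : ℝ≥0∞) * ez2 (A+B+1-k) (k+1) ≠ ⊤ :=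
    fun k hk => (ENNReal.sum_lt_top.mp (lt_top_iff_ne_top.mpr hS1) k hk).ne
  have ht2 : ∀ k ∈ range (B+1), (Nat.choose (A+B-k) A : ℝ≥0∞) * ez2 (A+B+1-k) (k+1) ≠ ⊤ :=
    fun k hk => (ENNReal.sum_lt_top.mp (lt_top_iff_ne_top.mpr hS2) k hk).ne
  have hz1 : ∀ k ∈ range (A+1), ez2 (A+B+1-k) (k+1) ≠ ⊤ := by
    intro k hk h
    have hC : (Nat.choose (A+B-k) B : ℝ≥0∞) ≠ 0 := by
      have hkA : k ≤ A := by simpa [Nat.lt_succ_iff] using hk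
      exact_mod_cast (Nat.choose_pos (by omega)).ne'
    exact ht1 k hk (by rw [h, ENNReal.mul_top hC])
  have hz2 : ∀ k ∈ range (B+1), ez2 (A+B+1-k) (k+1) ≠ ⊤ := by
    intro k hk h
    have hC : (Nat.choose (A+B-k) A : ℝ≥0∞) ≠ 0 := by
      have hkB : k ≤ B := by simpa [Nat.lt_succ_iff] using hk
      exact_mod_cast (Nat.choose_pos (by omega)).ne'
    exact ht2 k hk (by rw [h, ENNReal.mul_top hC])
  have main : rzeta (A+1) * rzeta (B+1) =
      (∑ k ∈ range (A+1), (Nat.choose (A+B-k) B : ℝ) * rzeta2 (A+B+1-k) (k+1))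
      + (∑ k ∈ range (B+1), (Nat.choose (A+B-k) A : ℝ) * rzeta2 (A+B+1-k) (k+1)) := by
    rw [rzeta_eq, rzeta_eq, ← ENNReal.toReal_mul, hkey, ENNReal.toReal_add hS1 hS2,
      ENNReal.toReal_sum ht1, ENNReal.toReal_sum ht2]
    congr 1
    · refine sum_congr rfl fun k hk => ?_
      rw [ENNReal.toReal_mul, ENNReal.toReal_natCast, rzeta2_eq]
    · refine sum_congr rfl fun k hk => ?_
      rw [ENNReal.toReal_mul, ENNReal.toReal_natCast, rzeta2_eq]
  rw [main]
  congr 1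
  · refine (Finset.sum_nbij' (fun i => A + 1 - i) (fun k => A + 1 - k) ?_ ?_ ?_ ?_ ?_).symm
    · intro i hi; simp only [mem_Icc] at hi; simp only [mem_range]; omega
    · intro k hk; simp only [mem_range] at hk; simp only [mem_Icc]; omega
    · intro i hi; simp only [mem_Icc] at hi; show A + 1 - (A + 1 - i) = i; omega
    · intro k hk; simp only [mem_range] at hk; show A + 1 - (A + 1 - k) = k; omega
    · intro i hi
      simp only [mem_Icc] at hi
      rw [show i + (B+1) - 2 = A+B-(A+1-i) by omega, show B+1-1 = B by omega,
        show i + (B+1) - 1 = A+B+1-(A+1-i) by omega, show A+1+1-i = (A+1-i)+1 by omega]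
  · refine (Finset.sum_nbij' (fun i => B + 1 - i) (fun k => B + 1 - k) ?_ ?_ ?_ ?_ ?_).symm
    · intro i hi; simp only [mem_Icc] at hi; simp only [mem_range]; omega
    · intro k hk; simp only [mem_range] at hk; simp only [mem_Icc]; omega
    · intro i hi; simp only [mem_Icc] at hi; show B + 1 - (B + 1 - i) = i; omega
    · intro k hk; simp only [mem_range] at hk; show B + 1 - (B + 1 - k) = k; omega
    · intro i hi
      simp only [mem_Icc] at hi
      rw [show i + (A+1) - 2 = A+B-(B+1-i) by omega, show A+1-1 = A by omega,
        show i + (A+1) - 1 = A+B+1-(B+1-i) by omega, show B+1+1-i = (B+1-i)+1 by omega]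
end
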